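/- arXiv:0812.0299 — 6 statements merged into one kernel-verified Lean document; each statement's English description precedes it below -/
import Mathlib

section
/- Let T be a k-dimensional torus with Lie algebra t, integral lattice Λ, and dual lattice Λ*. Suppose T acts on ℂ^N diagonally via weights w₁,…,w_N ∈ Λ*, with moment map μ(v) = π Σ_ν |v_ν|² w_ν. Then the moment map μ : ℂ^N → t* is a proper map if and only if there exists ξ ∈ t with ⟨w_ν, ξ⟩ < 0 for all ν = 1,…,N. -/
/-!
If `⟪w ν, ξ⟫ ≤ -c < 0` for all `ν`, then `-⟪μ v, ξ⟫ = π ∑ |v ν|² (-⟪w ν, ξ⟫) ≥ π c ‖v‖²`, so `‖v‖²`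
is bounded by a multiple of `‖μ v‖` and preimages of bounded sets are bounded. Conversely, if no
such `ξ` exists, Hahn–Banach puts `0` in the convex hull of the weights; convex weights `t ν` with
`∑ t ν • w ν = 0` give `v ≠ 0` with `|v ν|² = t ν` and `μ v = 0`. As `μ (c • v) = |c|² • μ v`, the
fibre `μ⁻¹ {0}` then contains the whole complex line through `v` and is not compact.
-/

open scoped RealInnerProductSpace
open Set

theorem exists_weights_of_mem_convexHull_range {R ι E : Type*} [Field R] [LinearOrder R]
    [IsStrictOrderedRing R] [Fintype ι] [AddCommGroup E] [Module R E] {v : ι → E} {x : E}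
    (hx : x ∈ convexHull R (range v)) :
    ∃ t : ι → R, (∀ i, 0 ≤ t i) ∧ ∑ i, t i = 1 ∧ ∑ i, t i • v i = x := by
  classical
  rw [convexHull_range_eq_exists_affineCombination] at hx
  obtain ⟨s, t, ht₀, ht₁, rfl⟩ := hx
  refine ⟨fun i => if i ∈ s then t i else 0, fun i => ?_, ?_, ?_⟩
  · dsimp only
    split_ifs with hi
    exacts [ht₀ i hi, le_rfl]
  · rw [Finset.sum_ite_mem, Finset.univ_inter, ht₁]
  · simp only [ite_smul, zero_smul, Finset.sum_ite_mem, Finset.univ_inter,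
      s.affineCombination_eq_linear_combination v t ht₁]

theorem exists_forall_inner_neg_of_zero_notMem_convexHull {ι F : Type*} [Finite ι]
    [NormedAddCommGroup F] [InnerProductSpace ℝ F] [CompleteSpace F] {w : ι → F}
    (h : (0 : F) ∉ convexHull ℝ (range w)) : ∃ ξ : F, ∀ i, ⟪w i, ξ⟫ < 0 := by
  obtain ⟨f, u, hf, hu⟩ := geometric_hahn_banach_closed_point (convex_convexHull ℝ _)
    ((finite_range w).isClosed_convexHull ℝ) h
  refine ⟨(InnerProductSpace.toDual ℝ F).symm f, fun i => ?_⟩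
  rw [real_inner_comm, InnerProductSpace.toDual_symm_apply]
  exact (hf _ (subset_convexHull ℝ _ (mem_range_self i))).trans (by simpa using hu)

theorem exists_pos_forall_le_of_forall_pos {ι : Type*} [Finite ι] {f : ι → ℝ}
    (hf : ∀ i, 0 < f i) : ∃ c, 0 < c ∧ ∀ i, c ≤ f i := by
  cases isEmpty_or_nonempty ι
  · exact ⟨1, one_pos, isEmptyElim⟩
  · obtain ⟨j, hj⟩ := Finite.exists_min f
    exact ⟨f j, hf j, hj⟩

section MomentMap

variable {ι F : Type*} [Fintype ι] [NormedAddCommGroup F] [InnerProductSpace ℝ F]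

noncomputable def momentMap (w : ι → F) (v : EuclideanSpace ℂ ι) : F :=
  Real.pi • ∑ i, ‖v i‖ ^ 2 • w i

variable (w : ι → F)

theorem continuous_momentMap : Continuous (momentMap w) := by
  unfold momentMap
  fun_prop

theorem momentMap_smul (c : ℂ) (v : EuclideanSpace ℂ ι) :
    momentMap w (c • v) = ‖c‖ ^ 2 • momentMap w v := by
  simp only [momentMap, PiLp.smul_apply, norm_smul, mul_pow, mul_smul, ← Finset.smul_sum]
  rw [smul_comm]

theorem inner_momentMap (v : EuclideanSpace ℂ ι) (ξ : F) :
    ⟪momentMap w v, ξ⟫ = Real.pi * ∑ i, ‖v i‖ ^ 2 * ⟪w i, ξ⟫ := by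
  simp only [momentMap, real_inner_smul_left, sum_inner]

theorem exists_ne_zero_momentMap_eq_zero (h : (0 : F) ∈ convexHull ℝ (range w)) :
    ∃ v : EuclideanSpace ℂ ι, v ≠ 0 ∧ momentMap w v = 0 := by
  obtain ⟨t, ht₀, ht₁, hsum⟩ := exists_weights_of_mem_convexHull_range h
  let v : EuclideanSpace ℂ ι := WithLp.toLp 2 fun i => (√(t i) : ℂ)
  have hv : ∀ i, ‖v i‖ ^ 2 = t i := fun i => by
    simp [v, Real.sq_sqrt (ht₀ i)]
  refine ⟨v, fun h0 => ?_, by simp only [momentMap, hv, hsum, smul_zero]⟩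
  have : ‖v‖ ^ 2 = 1 := by rw [EuclideanSpace.norm_sq_eq]; simp only [hv, ht₁]
  simp [h0] at this

theorem eq_zero_of_isProperMap_momentMap (hw : IsProperMap (momentMap w))
    {v : EuclideanSpace ℂ ι} (hv : momentMap w v = 0) : v = 0 := by
  by_contra hne
  obtain ⟨R, hR⟩ := (hw.isCompact_preimage (isCompact_singleton (x := 0))).isBounded.exists_norm_le
  have hpos : 0 < ‖v‖ := norm_pos_iff.mpr hne
  let c : ℂ := ((|R| + 1) / ‖v‖ : ℝ)
  have hc : ‖c • v‖ = |R| + 1 := by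
    rw [norm_smul, Complex.norm_real, Real.norm_eq_abs, abs_of_nonneg (by positivity),
      div_mul_cancel₀ _ hpos.ne']
  have := hR (c • v) (by simp [momentMap_smul, hv])
  linarith [le_abs_self R]

theorem mul_sq_norm_le_neg_inner_momentMap {ξ : F} {c : ℝ} (hc : ∀ i, c ≤ -⟪w i, ξ⟫)
    (v : EuclideanSpace ℂ ι) : Real.pi * c * ‖v‖ ^ 2 ≤ -⟪momentMap w v, ξ⟫ := by
  rw [inner_momentMap, EuclideanSpace.norm_sq_eq, mul_assoc, Finset.mul_sum, ← mul_neg,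
    ← Finset.sum_neg_distrib]
  gcongr with i
  rw [← mul_neg, mul_comm]
  exact mul_le_mul_of_nonneg_left (hc i) (sq_nonneg _)

theorem isProperMap_momentMap_of_forall_inner_neg {ξ : F} (hξ : ∀ i, ⟪w i, ξ⟫ < 0) :
    IsProperMap (momentMap w) := by
  obtain ⟨c, hc, hcξ⟩ := exists_pos_forall_le_of_forall_pos fun i => neg_pos.2 (hξ i)
  refine isProperMap_iff_isCompact_preimage.2 ⟨continuous_momentMap w, fun K hK => ?_⟩
  obtain ⟨R, hR⟩ := hK.isBounded.exists_norm_le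
  refine Metric.isCompact_of_isClosed_isBounded (hK.isClosed.preimage (continuous_momentMap w))
    (isBounded_iff_forall_norm_le.2 ⟨√(R * ‖ξ‖ / (Real.pi * c)), fun v hv => ?_⟩)
  rw [← abs_norm]
  refine Real.abs_le_sqrt ((le_div_iff₀ (by positivity)).2 ?_)
  calc ‖v‖ ^ 2 * (Real.pi * c) = Real.pi * c * ‖v‖ ^ 2 := by ring
    _ ≤ -⟪momentMap w v, ξ⟫ := mul_sq_norm_le_neg_inner_momentMap w hcξ v
    _ ≤ ‖momentMap w v‖ * ‖ξ‖ := (neg_le_abs _).trans (abs_real_inner_le_norm _ _)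
    _ ≤ R * ‖ξ‖ := by gcongr; exact hR _ hv

end MomentMap

/-- For the diagonal action of a `k`-torus on `ℂ^N` with weights
`w ν ∈ Λ* ⊂ t*`, the moment map `μ(v) = π ∑ ν ‖v ν‖² • w ν : ℂ^N → t*` is a proper map
if and only if there exists `ξ ∈ t` with `⟨w ν, ξ⟩ < 0` for all `ν = 1,…,N`. -/
theorem moment_map_proper_iff_negative_pairing
    (k N : ℕ) (w : Fin N → EuclideanSpace ℝ (Fin k)) :
    IsProperMap (fun v : EuclideanSpace ℂ (Fin N) =>
        Real.pi • ∑ ν, (‖v ν‖ ^ 2) • w ν) ↔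
      ∃ ξ : EuclideanSpace ℝ (Fin k), ∀ ν, ⟪w ν, ξ⟫ < 0 := by
  change IsProperMap (momentMap w) ↔ _
  refine ⟨fun hw => ?_, fun ⟨ξ, hξ⟩ => isProperMap_momentMap_of_forall_inner_neg w hξ⟩
  by_contra hξ
  have h0 : (0 : EuclideanSpace ℝ (Fin k)) ∈ convexHull ℝ (range w) := by
    by_contra h0
    exact hξ (exists_forall_inner_neg_of_zero_notMem_convexHull h0)
  obtain ⟨v, hv0, hv⟩ := exists_ne_zero_momentMap_eq_zero w h0
  exact hv0 (eq_zero_of_isProperMap_momentMap w hw hv)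
end

section
/- With the diagonal torus action on ℂ^N given by nonzero weights w₁,…,w_N ∈ Λ* and moment map μ(v) = π Σ_ν |v_ν|² w_ν, an element τ ∈ t* is a regular value of μ if and only if for every index set J ⊆ {1,…,N} and positive coefficients a_j > 0 with τ = Σ_{j∈J} a_j w_j, the family (w_j)_{j∈J} spans t*. -/
open scoped RealInnerProductSpace

/-!
The differential of `μ` at `v` only sees the coordinates where `v ν ≠ 0`, and there it can
produce any real coefficient (divide the target coefficient by `conj (v ν)`); so its image is
the span of the weights `w ν` with `v ν ≠ 0`. Points of `μ⁻¹(τ)` correspond to positive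
combinations `τ = ∑_{j ∈ J} a j • w j`: take `J` the support of `v` and `a j = π ‖v j‖²`,
and conversely `v j = √(a j / π)` on `J`.
-/

open Finset Function

section

variable {ι M : Type*} [Fintype ι] [AddCommGroup M] [Module ℝ M]

theorem range_smul_sum_re_mul_conj_smul {c : ℝ} (hc : c ≠ 0) (w : ι → M) (v : ι → ℂ) :
    Set.range (fun x : ι → ℂ => c • ∑ ν, (x ν * starRingEnd ℂ (v ν)).re • w ν) =
      Submodule.span ℝ (w '' support v) := by
  apply subset_antisymm
  · rintro _ ⟨x, rfl⟩
    refine Submodule.smul_mem _ _ (Submodule.sum_mem _ fun ν _ => ?_)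
    by_cases hν : v ν = 0
    · simp [hν]
    · exact Submodule.smul_mem _ _ (Submodule.subset_span ⟨ν, hν, rfl⟩)
  · intro y hy
    obtain ⟨l, hl, rfl⟩ := (Finsupp.mem_span_image_iff_linearCombination ℝ).mp hy
    -- Off the support of `v` both sides of `hcoeff` vanish, the left one because `z / 0 = 0`.
    refine ⟨fun ν => (l ν / c : ℝ) / starRingEnd ℂ (v ν), ?_⟩
    have hcoeff (ν : ι) :
        ((l ν / c : ℝ) / starRingEnd ℂ (v ν) * starRingEnd ℂ (v ν)).re = l ν / c := by
      by_cases hν : v ν = 0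
      · simp [hν, (Finsupp.mem_supported' ℝ l).mp hl ν (notMem_support.mpr hν)]
      · rw [div_mul_cancel₀ _ ((map_ne_zero _).mpr hν), Complex.ofReal_re]
    simp only [hcoeff, smul_sum, smul_smul, mul_div_cancel₀ _ hc]
    exact ((Finsupp.linearCombination_apply ℝ l).trans
      (Finsupp.sum_fintype _ _ fun _ => zero_smul ℝ _)).symm

theorem surjective_smul_sum_re_mul_conj_smul_iff {c : ℝ} (hc : c ≠ 0) (w : ι → M)
    (v : ι → ℂ) :
    (Surjective fun x : ι → ℂ => c • ∑ ν, (x ν * starRingEnd ℂ (v ν)).re • w ν) ↔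
      Submodule.span ℝ (w '' support v) = ⊤ := by
  rw [← Set.range_eq_univ, range_smul_sum_re_mul_conj_smul hc, Submodule.coe_eq_univ]

theorem smul_sum_sq_norm_smul_eq_sum (c : ℝ) (w : ι → M) {v : ι → ℂ} {J : Finset ι}
    (hJ : support v ⊆ J) : c • ∑ ν, (‖v ν‖ ^ 2) • w ν = ∑ ν ∈ J, (c * ‖v ν‖ ^ 2) • w ν := by
  rw [smul_sum, ← sum_subset (subset_univ J) fun ν _ hν => ?_]
  · simp only [smul_smul]
  · simp [notMem_support.mp fun h => hν (hJ h)]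

omit [Fintype ι] in
theorem exists_support_eq_and_mul_sq_norm_eq {c : ℝ} (hc : 0 < c) (J : Finset ι) {a : ι → ℝ}
    (ha : ∀ j ∈ J, 0 < a j) : ∃ v : ι → ℂ, support v = J ∧ ∀ j ∈ J, c * ‖v j‖ ^ 2 = a j := by
  classical
  refine ⟨fun ν => if ν ∈ J then (Real.sqrt (a ν / c) : ℂ) else 0, ?_, fun j hj => ?_⟩
  · ext ν
    by_cases hν : ν ∈ J
    · simp [hν, Real.sqrt_ne_zero', div_pos (ha ν hν) hc]
    · simp [hν]
  · simp only [if_pos hj, Complex.norm_real, Real.norm_eq_abs, sq_abs,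
      Real.sq_sqrt (div_nonneg (ha j hj).le hc.le), mul_div_cancel₀ _ hc.ne']

end

theorem moment_map_regular_value_iff_general
    (k N : ℕ) (w : Fin N → EuclideanSpace ℝ (Fin k))
    (τ : EuclideanSpace ℝ (Fin k)) :
    (∀ v : EuclideanSpace ℂ (Fin N),
        Real.pi • ∑ ν, (‖v ν‖ ^ 2) • w ν = τ →
        Function.Surjective fun x : EuclideanSpace ℂ (Fin N) =>
          (2 * Real.pi) • ∑ ν, (x ν * (starRingEnd ℂ) (v ν)).re • w ν) ↔
      ∀ (J : Finset (Fin N)) (a : Fin N → ℝ),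
        (∀ j ∈ J, 0 < a j) → τ = ∑ j ∈ J, a j • w j →
        Submodule.span ℝ (w '' ↑J) = ⊤ := by
  classical
  have hsurj (v : Fin N → ℂ) : (Surjective fun x : EuclideanSpace ℂ (Fin N) =>
      (2 * Real.pi) • ∑ ν, (x ν * (starRingEnd ℂ) (v ν)).re • w ν) ↔
        Submodule.span ℝ (w '' support v) = ⊤ :=
    (Surjective.of_comp_iff (fun x : Fin N → ℂ => _) (WithLp.ofLp_surjective 2)).trans
      (surjective_smul_sum_re_mul_conj_smul_iff (by positivity) w v)
  constructor
  · intro h J a ha hτ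
    obtain ⟨v, hsupp, hv⟩ := exists_support_eq_and_mul_sq_norm_eq Real.pi_pos J ha
    have hμ : Real.pi • ∑ ν, (‖v ν‖ ^ 2) • w ν = τ := by
      rw [smul_sum_sq_norm_smul_eq_sum _ _ hsupp.le, hτ]
      exact sum_congr rfl fun j hj => by rw [hv j hj]
    rw [← hsupp, ← hsurj]
    exact h (WithLp.toLp 2 v) hμ
  · intro h v hμ
    have hJ : support v.ofLp = ↑(univ.filter (v · ≠ 0)) := (coe_filter_univ _).symm
    rw [hsurj, hJ]
    refine h _ (fun ν => Real.pi * ‖v ν‖ ^ 2) (fun j hj => ?_) ?_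
    · have : v j ≠ 0 := (mem_filter.mp hj).2
      positivity
    · rw [← hμ, smul_sum_sq_norm_smul_eq_sum _ _ hJ.le]

/-- For the diagonal torus action on `ℂ^N` with nonzero weights
`w ν ∈ Λ*` and moment map `μ(v) = π ∑ ν ‖v ν‖² • w ν`, an element `τ ∈ t*` is a
regular value of `μ` (i.e. the differential `dμ_v(x) = 2π ∑ ν Re(x ν ⬝ conj (v ν)) • w ν`
is surjective at every `v ∈ μ⁻¹(τ)`) if and only if for every index set `J` and positive
coefficients `a j > 0` with `τ = ∑_{j ∈ J} a j • w j`, the family `(w j)_{j ∈ J}`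
spans `t*`. -/
theorem moment_map_regular_value_iff
    (k N : ℕ) (w : Fin N → EuclideanSpace ℝ (Fin k)) (hw : ∀ ν, w ν ≠ 0)
    (τ : EuclideanSpace ℝ (Fin k)) :
    (∀ v : EuclideanSpace ℂ (Fin N),
        Real.pi • ∑ ν, (‖v ν‖ ^ 2) • w ν = τ →
        Function.Surjective fun x : EuclideanSpace ℂ (Fin N) =>
          (2 * Real.pi) • ∑ ν, (x ν * (starRingEnd ℂ) (v ν)).re • w ν) ↔
      ∀ (J : Finset (Fin N)) (a : Fin N → ℝ),
        (∀ j ∈ J, 0 < a j) → τ = ∑ j ∈ J, a j • w j →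
        Submodule.span ℝ (w '' ↑J) = ⊤ :=
  moment_map_regular_value_iff_general k N w τ
end

section
/- Let T act on S^{2n-1} ⊂ ℂⁿ via nonzero weights w₁,…,w_n ∈ Λ*, no two of which are negative multiples of each other, and let e₁ ∈ Λ be primitive with ⟨w_j, e₁⟩ ≠ 0 for all j, generating the subtorus T₁. Group the weights into maximal colinear families determined by representatives w₁,…,w_N (pairwise non-proportional), with w_j ∈ {ℓ·w_ν : ℓ ∈ ℤ_{>0}} for a unique ν. Let V_ν := {z ∈ ℂⁿ : z_j = 0 whenever w_j is not parallel to w_ν} and S_ν := V_ν ∩ S^{2n-1}. Then the T₁-relative fixed point set F_{T₁} = {z ∈ S^{2n-1} : L_z(t) = L_z(t₁)} equals the disjoint union ⊔_{ν=1}^N S_ν. -/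
open scoped RealInnerProductSpace

/-!
Since `L_z` is linear, `L_z(t) = L_z(ℝ e₁)` means that for every `ξ` there is an `r` with
`⟨w j, ξ⟩ = r ⟨w j, e₁⟩` for all `j` in the support of `z`. For two such weights `u`, `v` this
forces `v = (⟨v, e₁⟩ / ⟨u, e₁⟩) u`, and the coefficient is positive because `w` has no pair of
negatively proportional weights. So the support of `z` lies in one positive-colinear family, and
conversely; the families partition the weights, and `z ≠ 0` on the sphere gives disjointness.
-/

section IsPosMultiple

variable (𝕜 : Type*) {V : Type*} [Field 𝕜] [LinearOrder 𝕜] [IsStrictOrderedRing 𝕜]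
  [AddCommGroup V] [Module 𝕜 V]

def IsPosMultiple (x y : V) : Prop := ∃ c : 𝕜, 0 < c ∧ x = c • y

variable {𝕜}

theorem IsPosMultiple.symm {x y : V} (h : IsPosMultiple 𝕜 x y) : IsPosMultiple 𝕜 y x := by
  obtain ⟨c, hc, rfl⟩ := h
  exact ⟨c⁻¹, inv_pos.2 hc, by rw [smul_smul, inv_mul_cancel₀ hc.ne', one_smul]⟩

theorem IsPosMultiple.trans {x y z : V} (hxy : IsPosMultiple 𝕜 x y) (hyz : IsPosMultiple 𝕜 y z) :
    IsPosMultiple 𝕜 x z := by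
  obtain ⟨c, hc, rfl⟩ := hxy
  obtain ⟨d, hd, rfl⟩ := hyz
  exact ⟨c * d, mul_pos hc hd, smul_smul c d z⟩

end IsPosMultiple

section InfinitesimalAction

variable {ι E : Type*} [NormedAddCommGroup E] [InnerProductSpace ℝ E]

/-- `L_z(ξ)` for the torus acting on `ℂ^ι` with weights `w`. -/
noncomputable def infinitesimalAction (w : ι → E) (z : ι → ℂ) (ξ : E) : ι → ℂ :=
  fun j => 2 * Real.pi * Complex.I * ((⟪w j, ξ⟫ : ℝ) : ℂ) * z j

theorem infinitesimalAction_eq_iff {w : ι → E} {z : ι → ℂ} {ξ η : E} :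
    infinitesimalAction w z ξ = infinitesimalAction w z η ↔
      ∀ j, z j ≠ 0 → ⟪w j, ξ⟫ = ⟪w j, η⟫ := by
  have h2πI : (2 * Real.pi * Complex.I : ℂ) ≠ 0 := by simp [Real.pi_ne_zero]
  simp only [infinitesimalAction, funext_iff, mul_eq_mul_right_iff, mul_eq_mul_left_iff, h2πI,
    or_false, Complex.ofReal_inj, ← or_iff_not_imp_right]

theorem range_infinitesimalAction_eq_iff {w : ι → E} {z : ι → ℂ} {e : E} :
    Set.range (infinitesimalAction w z) =
        Set.range (fun r : ℝ => infinitesimalAction w z (r • e)) ↔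
      ∀ ξ, ∃ r : ℝ, ∀ j, z j ≠ 0 → ⟪w j, ξ⟫ = r * ⟪w j, e⟫ := by
  refine ⟨fun h ξ => ?_, fun h => ?_⟩
  · obtain ⟨r, hr⟩ := h ▸ Set.mem_range_self ξ
    exact ⟨r, fun j hj => by rw [infinitesimalAction_eq_iff.1 hr.symm j hj, real_inner_smul_right]⟩
  · refine ((Set.range_comp_subset_range (· • e) _).antisymm ?_).symm
    rintro _ ⟨ξ, rfl⟩
    obtain ⟨r, hr⟩ := h ξ
    exact ⟨r, infinitesimalAction_eq_iff.2 fun j hj => by rw [hr j hj, real_inner_smul_right]⟩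

end InfinitesimalAction

section InnerProductSpace

variable {E : Type*} [NormedAddCommGroup E] [InnerProductSpace ℝ E]

theorem eq_div_smul_of_forall_exists_inner_eq {u v e : E} (hu : ⟪u, e⟫ ≠ 0)
    (h : ∀ ξ, ∃ r : ℝ, ⟪u, ξ⟫ = r * ⟪u, e⟫ ∧ ⟪v, ξ⟫ = r * ⟪v, e⟫) :
    v = (⟪v, e⟫ / ⟪u, e⟫) • u := by
  refine ext_inner_right ℝ fun ξ => ?_
  obtain ⟨r, hu', hv'⟩ := h ξ
  rw [real_inner_smul_left, hu', hv']
  field_simp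

theorem isPosMultiple_of_forall_exists_inner_eq {u v e : E} (hneg : ∀ c : ℝ, c < 0 → v ≠ c • u)
    (hu : ⟪u, e⟫ ≠ 0) (hv : ⟪v, e⟫ ≠ 0)
    (h : ∀ ξ, ∃ r : ℝ, ⟪u, ξ⟫ = r * ⟪u, e⟫ ∧ ⟪v, ξ⟫ = r * ⟪v, e⟫) :
    IsPosMultiple ℝ v u := by
  have hvu := eq_div_smul_of_forall_exists_inner_eq hu h
  exact ⟨_, (div_ne_zero hv hu).lt_or_gt.resolve_left fun hneg' => hneg _ hneg' hvu, hvu⟩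

end InnerProductSpace

theorem relative_fixed_point_set_of_sphere_general
    (k n : ℕ) (w : Fin n → EuclideanSpace ℝ (Fin k)) (e₁ : EuclideanSpace ℝ (Fin k))
    (hneg : ∀ i j (c : ℝ), c < 0 → w i ≠ c • w j)
    (he : ∀ j, (⟪w j, e₁⟫ : ℝ) ≠ 0) :
    ({z : EuclideanSpace ℂ (Fin n) | ‖z‖ = 1 ∧
        Set.range (fun ξ : EuclideanSpace ℝ (Fin k) =>
          fun j : Fin n => (2 * Real.pi * Complex.I * ((⟪w j, ξ⟫ : ℝ) : ℂ)) * z j) =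
        Set.range (fun r : ℝ =>
          fun j : Fin n => (2 * Real.pi * Complex.I * ((⟪w j, r • e₁⟫ : ℝ) : ℂ)) * z j)}
      = ⋃ i : Fin n,
          {z : EuclideanSpace ℂ (Fin n) | ‖z‖ = 1 ∧
            ∀ j, ¬ (∃ c : ℝ, 0 < c ∧ w j = c • w i) → z j = 0}) ∧
    (∀ i j : Fin n, ¬ (∃ c : ℝ, 0 < c ∧ w i = c • w j) →
      ({z : EuclideanSpace ℂ (Fin n) | ‖z‖ = 1 ∧
          ∀ l, ¬ (∃ c : ℝ, 0 < c ∧ w l = c • w i) → z l = 0} ∩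
        {z : EuclideanSpace ℂ (Fin n) | ‖z‖ = 1 ∧
          ∀ l, ¬ (∃ c : ℝ, 0 < c ∧ w l = c • w j) → z l = 0}) = ∅) := by
  have hsupport : ∀ z : EuclideanSpace ℂ (Fin n), ‖z‖ = 1 → ∃ i, z i ≠ 0 := fun z hz => by
    by_contra! h
    simp [show z = 0 from PiLp.ext h] at hz
  refine ⟨Set.ext fun z => ?_, fun i j hij => Set.eq_empty_iff_forall_notMem.2 ?_⟩
  · simp only [Set.mem_ofPred_eq, Set.mem_iUnion]
    refine (and_congr_right fun _ =>
      range_infinitesimalAction_eq_iff (w := w) (z := z.ofLp) (e := e₁)).trans ⟨?_, ?_⟩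
    · rintro ⟨hz, h⟩
      obtain ⟨i, hi⟩ := hsupport z hz
      refine ⟨i, hz, fun j => not_imp_comm.1 fun hj => ?_⟩
      refine isPosMultiple_of_forall_exists_inner_eq (hneg j i) (he i) (he j) fun ξ => ?_
      obtain ⟨r, hr⟩ := h ξ
      exact ⟨r, hr i hi, hr j hj⟩
    · rintro ⟨i, hz, hi⟩
      refine ⟨hz, fun ξ => ⟨⟪w i, ξ⟫ / ⟪w i, e₁⟫, fun j hj => ?_⟩⟩
      obtain ⟨c, -, hc⟩ := not_imp_comm.1 (hi j) hj
      rw [hc, real_inner_smul_left, real_inner_smul_left]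
      field_simp [he i]
  · rintro z ⟨⟨hz, hi⟩, -, hj⟩
    obtain ⟨l, hl⟩ := hsupport z hz
    exact hij ((IsPosMultiple.symm (not_imp_comm.1 (hi l) hl)).trans (not_imp_comm.1 (hj l) hl))

/-- Let the torus `T` act on `S^{2n-1} ⊂ ℂⁿ` via nonzero weights
`w₁, …, w_n ∈ Λ*`, no two of which are negative multiples of each other, and let
`e₁ ∈ Λ` satisfy `⟨w j, e₁⟩ ≠ 0` for all `j` (so the subtorus `T₁` it generates acts
locally freely).  The infinitesimal action at `z` is
`L z ξ = (2πi ⟨w j, ξ⟩ z j)_j`.  Writing `w i ∥ w j` for "`w i` is a positive multiple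
of `w j`" and `S_i = {z ∈ S^{2n-1} | z j = 0 whenever ¬(w j ∥ w i)}` for the unit
spheres of the maximal colinear coordinate subspaces `V_ν`, the `T₁`-relative fixed
point set `F_{T₁} = {z ∈ S^{2n-1} | L z (t) = L z (ℝ e₁)}` equals the union of the
`S_i`, and the `S_i`, `S_j` for non-parallel `w i`, `w j` are disjoint. -/
theorem relative_fixed_point_set_of_sphere
    (k n : ℕ) (w : Fin n → EuclideanSpace ℝ (Fin k)) (e₁ : EuclideanSpace ℝ (Fin k))
    (hw0 : ∀ j, w j ≠ 0)
    (hneg : ∀ i j (c : ℝ), c < 0 → w i ≠ c • w j)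
    (he : ∀ j, (⟪w j, e₁⟫ : ℝ) ≠ 0) :
    ({z : EuclideanSpace ℂ (Fin n) | ‖z‖ = 1 ∧
        Set.range (fun ξ : EuclideanSpace ℝ (Fin k) =>
          fun j : Fin n => (2 * Real.pi * Complex.I * ((⟪w j, ξ⟫ : ℝ) : ℂ)) * z j) =
        Set.range (fun r : ℝ =>
          fun j : Fin n => (2 * Real.pi * Complex.I * ((⟪w j, r • e₁⟫ : ℝ) : ℂ)) * z j)}
      = ⋃ i : Fin n,
          {z : EuclideanSpace ℂ (Fin n) | ‖z‖ = 1 ∧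
            ∀ j, ¬ (∃ c : ℝ, 0 < c ∧ w j = c • w i) → z j = 0}) ∧
    (∀ i j : Fin n, ¬ (∃ c : ℝ, 0 < c ∧ w i = c • w j) →
      ({z : EuclideanSpace ℂ (Fin n) | ‖z‖ = 1 ∧
          ∀ l, ¬ (∃ c : ℝ, 0 < c ∧ w l = c • w i) → z l = 0} ∩
        {z : EuclideanSpace ℂ (Fin n) | ‖z‖ = 1 ∧
          ∀ l, ¬ (∃ c : ℝ, 0 < c ∧ w l = c • w j) → z l = 0}) = ∅) :=
  relative_fixed_point_set_of_sphere_general k n w e₁ hneg he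
end

section
/- Let w₁,…,w_N ∈ Λ* ⊂ t* with dim t* = k, and for index sets I ⊆ {1,…,N} let W_I = { Σ_{i∈I} c_i w_i : c_i ≥ 0 } be the associated cone. Call W_I a wall if the family (w_i)_{i∈I} has rank k−1 and I contains every index i with w_i ∈ W_I. Then τ ∈ t* fails to be regular for the collection (w_ν) if and only if τ lies in some wall; equivalently, the set of non-regular elements equals the union of all walls. -/
/-! A non-regular `τ` is a positive combination of weights spanning a proper subspace. Since
the weights span `t*`, adding weights one at a time raises the dimension of their span by one,
so that subspace sits inside a hyperplane `U` spanned by weights; the weights lying in `U` then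
index a wall containing `τ`. Conversely, dropping the zero coefficients of `τ` in a wall
exhibits it as a positive combination of weights that span at most the hyperplane of the
wall. -/

open Module Submodule Finset

section Cone

variable {ι R M : Type*} [Semiring R] [PartialOrder R] [AddCommMonoid M] [Module R M]

theorem exists_subset_pos_sum_smul_eq (I : Finset ι) (c : ι → R) (w : ι → M)
    (hc : ∀ l ∈ I, 0 ≤ c l) :
    ∃ J ⊆ I, (∀ j ∈ J, 0 < c j) ∧ ∑ j ∈ J, c j • w j = ∑ l ∈ I, c l • w l := by
  classical
  refine ⟨I.filter (fun l => c l • w l ≠ 0), filter_subset _ _, fun j hj => ?_,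
    sum_filter_ne_zero _⟩
  obtain ⟨hjI, hj0⟩ := mem_filter.1 hj
  exact (hc j hjI).lt_of_ne (left_ne_zero_of_smul hj0).symm

theorem exists_nonneg_sum_smul_eq_of_subset {J I : Finset ι} (hJI : J ⊆ I) (a : ι → R)
    (w : ι → M) (ha : ∀ j ∈ J, 0 ≤ a j) :
    ∃ c : ι → R, (∀ l, 0 ≤ c l) ∧ ∑ j ∈ J, a j • w j = ∑ l ∈ I, c l • w l := by
  classical
  refine ⟨fun l => if l ∈ J then a l else 0, fun l => ?_, ?_⟩
  · dsimp only
    split_ifs with hl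
    exacts [ha l hl, le_rfl]
  · rw [← sum_subset hJI fun l _ hl => by simp only [if_neg hl, zero_smul]]
    exact sum_congr rfl fun j hj => by simp only [if_pos hj]

end Cone

section Span

variable {ι K V : Type*} [DivisionRing K] [AddCommGroup V] [Module K V]

theorem exists_finrank_span_image_insert [Module.Finite K V] {w : ι → V}
    (hw : span K (Set.range w) = ⊤) {s : Set ι} (hs : span K (w '' s) ≠ ⊤) :
    ∃ i, finrank K (span K (w '' insert i s)) = finrank K (span K (w '' s)) + 1 := by
  obtain ⟨i, hi⟩ : ∃ i, w i ∉ span K (w '' s) := by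
    by_contra! h
    exact hs (eq_top_iff.2 (hw ▸ span_le.2 (Set.range_subset_iff.2 h)))
  exact ⟨i, by rw [Set.image_insert_eq, span_insert, sup_comm, finrank_sup_span_singleton hi]⟩

theorem exists_superset_finrank_span_image_eq [Module.Finite K V] {w : ι → V}
    (hw : span K (Set.range w) = ⊤) (s : Set ι) {m : ℕ} (hsm : finrank K (span K (w '' s)) ≤ m)
    (hm : m ≤ finrank K V) :
    ∃ t, s ⊆ t ∧ finrank K (span K (w '' t)) = m := by
  induction m, hsm using Nat.le_induction with
  | base => exact ⟨s, subset_rfl, rfl⟩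
  | succ m _ ih =>
    obtain ⟨t, hst, ht⟩ := ih (by omega)
    have hne : span K (w '' t) ≠ ⊤ := fun h => by
      rw [h, finrank_top] at ht
      omega
    obtain ⟨i, hi⟩ := exists_finrank_span_image_insert hw hne
    exact ⟨insert i t, hst.trans (Set.subset_insert i t), hi.trans (by rw [ht])⟩

theorem span_image_filter_mem_span_image [Fintype ι] (w : ι → V) (t : Set ι)
    [DecidablePred fun i => w i ∈ span K (w '' t)] :
    span K (w '' ↑(univ.filter fun i => w i ∈ span K (w '' t))) = span K (w '' t) := by
  refine le_antisymm (span_le.2 ?_) (span_mono (Set.image_mono fun i hi => ?_))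
  · rintro _ ⟨i, hi, rfl⟩
    simpa using hi
  · simpa using subset_span (Set.mem_image_of_mem w hi)

end Span

/-- Let `w₁, …, w_N ∈ Λ* ⊂ t*` span `t* = ℝ^k` (`k > 0`), and for an
index set `I` let `W_I = {∑_{i∈I} c i • w i | c i ≥ 0}` be the associated cone.  `W_I`
is a *wall* if the family `(w i)_{i∈I}` has rank `k - 1` and `I` is complete (it
contains every index `i` with `w i ∈ W_I`).  Then `τ ∈ t*` fails to be regular for
`(w ν)` if and only if `τ` lies in some wall. -/
theorem nonregular_iff_in_wall
    (k N : ℕ) (hk : 0 < k) (w : Fin N → EuclideanSpace ℝ (Fin k))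
    (hspan : Submodule.span ℝ (Set.range w) = ⊤)
    (τ : EuclideanSpace ℝ (Fin k)) :
    (¬ ∀ (J : Finset (Fin N)) (a : Fin N → ℝ),
        (∀ j ∈ J, 0 < a j) → τ = ∑ j ∈ J, a j • w j →
        Submodule.span ℝ (w '' ↑J) = ⊤) ↔
      ∃ I : Finset (Fin N),
        (Module.finrank ℝ (Submodule.span ℝ (w '' ↑I)) = k - 1 ∧
          ∀ i : Fin N,
            (∃ c : Fin N → ℝ, (∀ l, 0 ≤ c l) ∧ w i = ∑ l ∈ I, c l • w l) → i ∈ I) ∧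
        ∃ c : Fin N → ℝ, (∀ l, 0 ≤ c l) ∧ τ = ∑ l ∈ I, c l • w l := by
  classical
  have hdim : finrank ℝ (EuclideanSpace ℝ (Fin k)) = k := finrank_euclideanSpace_fin
  constructor
  · push Not
    rintro ⟨J, a, ha, hτ, hJ⟩
    have hJk := hdim ▸ Submodule.finrank_lt hJ
    obtain ⟨t, hJt, ht⟩ := exists_superset_finrank_span_image_eq hspan (↑J) (m := k - 1)
      (by omega) (by omega)
    set I := univ.filter fun i => w i ∈ span ℝ (w '' t)
    have hI := span_image_filter_mem_span_image (K := ℝ) w t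
    have hJI : J ⊆ I := fun j hj => by
      simpa [I] using subset_span (Set.mem_image_of_mem w (hJt hj))
    obtain ⟨c, hc, hsum⟩ := exists_nonneg_sum_smul_eq_of_subset hJI a w fun j hj => (ha j hj).le
    refine ⟨I, ⟨hI ▸ ht, fun i ⟨b, _, hi⟩ => ?_⟩, c, hc, hτ.trans hsum⟩
    have : w i ∈ span ℝ (w '' ↑I) :=
      hi ▸ sum_smul_mem _ b fun l hl => subset_span (Set.mem_image_of_mem w hl)
    rw [hI] at this
    simpa [I] using this
  · rintro ⟨I, ⟨hrank, -⟩, c, hc, hτ⟩ hreg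
    obtain ⟨J, hJI, hpos, hJ⟩ := exists_subset_pos_sum_smul_eq I c w fun l _ => hc l
    have hI : span ℝ (w '' ↑I) ≠ ⊤ := fun h => by
      rw [h, finrank_top, hdim] at hrank
      omega
    exact hI (eq_top_iff.2 (hreg J c hpos (hτ.trans hJ.symm) ▸ span_mono (Set.image_mono hJI)))
end

section
/- Let X be a closed symplectic manifold (X, ω) carrying a nontrivial Hamiltonian S¹-action with moment map μ : X → ℝ. Then there exists a class α ∈ π₂(X) whose image ᾱ ∈ H₂(X;ℤ) satisfies ∫_ᾱ ω > 0. In particular, a closed symplectically aspherical manifold admits no nontrivial Hamiltonian S¹-action. -/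
/-!
The moment map is invariant under the flow, and by nondegeneracy of `ω` its critical points are
the zeros of the generating field `X`; a point at which `dμ` vanishes along the whole orbit is
fixed. On the connected component of a non-fixed point, `μ` therefore attains its minimum and
maximum at fixed points `p` and `q`, with `μ p < μ q`. Rotating a smooth path `c` from `p` to `q`
by the action gives a cylinder `u (s, t) = a t (c s)` whose ends collapse to `p` and `q`, that is a
sphere. Since `∂ₜu = X` and `ω (∂ₛu) X = dμ (∂ₛu) = (μ ∘ c)' s`, its symplectic area is
`μ q - μ p > 0`.
-/

open scoped Manifold
open Filter Set Topology MeasureTheory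

section ManifoldCalculus

variable {E : Type*} [NormedAddCommGroup E] [NormedSpace ℝ E]
  {M : Type*} [TopologicalSpace M] [ChartedSpace E M]

theorem IsLocalExtr.mfderiv_eq_zero {f : M → ℝ} {y : M} (h : IsLocalExtr f y) :
    mfderiv 𝓘(ℝ, E) 𝓘(ℝ, ℝ) f y = 0 := by
  by_cases hf : MDifferentiableAt 𝓘(ℝ, E) 𝓘(ℝ, ℝ) f y
  swap
  · exact mfderiv_zero_of_not_mdifferentiableAt hf
  have hchart : IsLocalExtr (f ∘ (extChartAt 𝓘(ℝ, E) y).symm) (extChartAt 𝓘(ℝ, E) y y) := by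
    apply IsLocalExtr.comp_continuous
    · rwa [extChartAt_to_inv]
    · exact continuousAt_extChartAt_symm y
  rw [hf.mfderiv]
  simp only [writtenInExtChartAt, extChartAt_model_space_eq_id, PartialEquiv.refl_coe,
    Function.id_comp, modelWithCornersSelf_coe, range_id, fderivWithin_univ]
  exact hchart.fderiv_eq_zero

variable {F G : Type*} [NormedAddCommGroup F] [NormedSpace ℝ F] [NormedAddCommGroup G]
  [NormedSpace ℝ G]

theorem MDifferentiableAt.mfderiv_apply_inl {u : F × G → M} {x : F} {y : G}
    (hu : MDifferentiableAt 𝓘(ℝ, F × G) 𝓘(ℝ, E) u (x, y)) (v : F) :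
    mfderiv 𝓘(ℝ, F × G) 𝓘(ℝ, E) u (x, y) (v, 0)
      = mfderiv 𝓘(ℝ, F) 𝓘(ℝ, E) (fun x' => u (x', y)) x v := by
  have h := hu.hasMFDerivAt.comp x (hasFDerivAt_prodMk_left (𝕜 := ℝ) x y).hasMFDerivAt
  rw [show (fun x' => u (x', y)) = u ∘ fun x' => (x', y) from rfl, h.mfderiv]
  rfl

theorem MDifferentiableAt.mfderiv_apply_inr {u : F × G → M} {x : F} {y : G}
    (hu : MDifferentiableAt 𝓘(ℝ, F × G) 𝓘(ℝ, E) u (x, y)) (w : G) :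
    mfderiv 𝓘(ℝ, F × G) 𝓘(ℝ, E) u (x, y) (0, w)
      = mfderiv 𝓘(ℝ, G) 𝓘(ℝ, E) (fun y' => u (x, y')) y w := by
  have h := hu.hasMFDerivAt.comp y (hasFDerivAt_prodMk_right (𝕜 := ℝ) x y).hasMFDerivAt
  rw [show (fun y' => u (x, y')) = u ∘ fun y' => (x, y') from rfl, h.mfderiv]
  rfl

theorem isLocallyConstant_of_mfderiv_eq_zero [IsManifold 𝓘(ℝ, E) 1 M] {f : F → M}
    (hf : MDifferentiable 𝓘(ℝ, F) 𝓘(ℝ, E) f) (hf' : ∀ x, mfderiv 𝓘(ℝ, F) 𝓘(ℝ, E) f x = 0) :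
    IsLocallyConstant f := by
  refine (IsLocallyConstant.iff_eventually_eq f).2 fun x₀ => ?_
  set e := extChartAt 𝓘(ℝ, E) (f x₀)
  set s := f ⁻¹' e.source
  have hs : IsOpen s := (isOpen_extChartAt_source (f x₀)).preimage hf.continuous
  have hderiv : ∀ x ∈ s, HasFDerivAt (e ∘ f) (0 : F →L[ℝ] E) x := by
    intro x hx
    have he : MDifferentiableAt 𝓘(ℝ, E) 𝓘(ℝ, E) e (f x) :=
      mdifferentiableAt_extChartAt (by rwa [← extChartAt_source 𝓘(ℝ, E)])
    have := he.hasMFDerivAt.comp x (hf' x ▸ (hf x).hasMFDerivAt)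
    rw [ContinuousLinearMap.comp_zero] at this
    exact hasMFDerivAt_iff_hasFDerivAt.1 this
  have hconst := hs.isOpen_inter_preimage_of_fderiv_eq_zero
    (fun x hx => (hderiv x hx).differentiableAt.differentiableWithinAt)
    (fun x hx => (hderiv x hx).fderiv) {e (f x₀)}
  filter_upwards [hconst.mem_nhds ⟨mem_extChartAt_source (f x₀), rfl⟩] with x hx
  exact e.injOn hx.1 (mem_extChartAt_source (f x₀)) hx.2

end ManifoldCalculus

section FlatPaths

variable (E : Type*) [NormedAddCommGroup E] [NormedSpace ℝ E]
  {M : Type*} [TopologicalSpace M] [ChartedSpace E M]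

/-- Being constant near both ends is what makes concatenations of such paths smooth. -/
def JoinedBySmoothFlatPath (p q : M) : Prop :=
  ∃ c : ℝ → M, ContMDiff 𝓘(ℝ, ℝ) 𝓘(ℝ, E) (⊤ : ℕ∞) c ∧ (∀ s ≤ 0, c s = p) ∧ ∀ s, 1 ≤ s → c s = q

variable {E}

namespace JoinedBySmoothFlatPath

theorem symm {p q : M} (h : JoinedBySmoothFlatPath E p q) : JoinedBySmoothFlatPath E q p := by
  obtain ⟨c, hc, hcp, hcq⟩ := h
  refine ⟨fun s => c (1 - s), hc.comp (contMDiff_iff_contDiff.2 (by fun_prop)), fun s hs => ?_,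
    fun s hs => ?_⟩
  · exact hcq _ (by linarith)
  · exact hcp _ (by linarith)

theorem trans {p q r : M} (h₁ : JoinedBySmoothFlatPath E p q)
    (h₂ : JoinedBySmoothFlatPath E q r) : JoinedBySmoothFlatPath E p r := by
  obtain ⟨c₁, hc₁, hc₁p, hc₁q⟩ := h₁
  obtain ⟨c₂, hc₂, hc₂q, hc₂r⟩ := h₂
  have hleft : ContMDiff 𝓘(ℝ, ℝ) 𝓘(ℝ, E) (⊤ : ℕ∞) fun s => c₁ (3 * s) :=
    hc₁.comp (contMDiff_iff_contDiff.2 (by fun_prop))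
  have hright : ContMDiff 𝓘(ℝ, ℝ) 𝓘(ℝ, E) (⊤ : ℕ∞) fun s => c₂ (3 * s - 2) :=
    hc₂.comp (contMDiff_iff_contDiff.2 (by fun_prop))
  refine ⟨fun s => if s ≤ 1 / 2 then c₁ (3 * s) else c₂ (3 * s - 2), fun s₀ => ?_,
    fun s hs => ?_, fun s hs => ?_⟩
  · rcases lt_trichotomy s₀ (1 / 2) with h | rfl | h
    · exact (hleft s₀).congr_of_eventuallyEq
        ((eventually_lt_nhds h).mono fun s hs => if_pos hs.le)
    · -- both pieces are constant on `[1/3, 2/3]`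
      refine contMDiffAt_const (c := q) |>.congr_of_eventuallyEq ?_
      filter_upwards [Ioo_mem_nhds (by norm_num : (1 / 3 : ℝ) < 1 / 2)
        (by norm_num : (1 / 2 : ℝ) < 2 / 3)] with s hs
      split_ifs
      · exact hc₁q _ (by linarith [hs.1])
      · exact hc₂q _ (by linarith [hs.2])
    · exact (hright s₀).congr_of_eventuallyEq
        ((eventually_gt_nhds h).mono fun s hs => if_neg (not_le.2 hs))
  · simp only [if_pos (show s ≤ 1 / 2 by linarith)]
    exact hc₁p _ (by linarith)
  · simp only [if_neg (show ¬s ≤ 1 / 2 by linarith)]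
    exact hc₂r _ (by linarith)

end JoinedBySmoothFlatPath

variable [IsManifold 𝓘(ℝ, E) (⊤ : ℕ∞) M]

theorem eventually_joinedBySmoothFlatPath (p : M) :
    ∀ᶠ q in 𝓝 p, JoinedBySmoothFlatPath E p q := by
  set e := extChartAt 𝓘(ℝ, E) p
  obtain ⟨ε, hε, hball⟩ :=
    Metric.isOpen_iff.1 (isOpen_extChartAt_target p) (e p) (mem_extChartAt_target p)
  filter_upwards [extChartAt_source_mem_nhds (I := 𝓘(ℝ, E)) p,
    (continuousAt_extChartAt (I := 𝓘(ℝ, E)) p).preimage_mem_nhds (Metric.ball_mem_nhds _ hε)]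
    with q hq hqε
  set γ : ℝ → E := fun s => e p + Real.smoothTransition s • (e q - e p)
  have hγ : ∀ s, γ s ∈ e.target := fun s => hball <|
    (convex_ball (e p) ε).add_smul_sub_mem (Metric.mem_ball_self hε) hqε
      ⟨Real.smoothTransition.nonneg s, Real.smoothTransition.le_one s⟩
  refine ⟨e.symm ∘ γ, (contMDiffOn_extChartAt_symm p).comp_contMDiff
    (contMDiff_iff_contDiff.2 (by fun_prop)) hγ, fun s hs => ?_, fun s hs => ?_⟩
  · simp [γ, Real.smoothTransition.zero_of_nonpos hs, e.left_inv (mem_extChartAt_source p)]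
  · simp [γ, Real.smoothTransition.one_of_one_le hs, e.left_inv hq]

theorem IsPreconnected.joinedBySmoothFlatPath {s : Set M} (hs : IsPreconnected s) {p q : M}
    (hp : p ∈ s) (hq : q ∈ s) : JoinedBySmoothFlatPath E p q :=
  hs.induction₂ _
    (fun x _ => eventually_nhdsWithin_of_eventually_nhds (eventually_joinedBySmoothFlatPath x))
    (fun _ _ _ _ _ _ h h' => h.trans h') (fun _ _ _ _ h => h.symm) hp hq

end FlatPaths

section Integration

theorem setIntegral_univ_prod_fst (g : ℝ → ℝ) (s : Set ℝ) :
    ∫ z in (univ : Set ℝ) ×ˢ s, g z.1 = volume.real s * ∫ x, g x := by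
  have h := integral_prod_mul (μ := (volume : Measure ℝ)) (ν := volume.restrict s) g
    fun _ => (1 : ℝ)
  rw [Measure.volume_eq_prod, ← Measure.prod_restrict, Measure.restrict_univ]
  simpa [mul_comm] using h

theorem integral_deriv_eq_sub_of_forall_le_of_forall_ge {f : ℝ → ℝ} (hf : ContDiff ℝ 1 f)
    (a b : ℝ) (ha : ∀ x ≤ a, f x = f a) (hb : ∀ x, b ≤ x → f x = f b) :
    ∫ x, deriv f x = f b - f a := by
  have hsupp : HasCompactSupport (deriv f) := by
    refine HasCompactSupport.intro (isCompact_Icc (a := a) (b := b)) fun x hx => ?_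
    rcases not_and_or.1 hx with hxa | hxb
    · have : f =ᶠ[𝓝 x] fun _ => f a :=
        eventually_of_mem (Iio_mem_nhds (not_le.1 hxa)) fun y hy => ha y (le_of_lt hy)
      rw [this.deriv_eq, deriv_const]
    · have : f =ᶠ[𝓝 x] fun _ => f b :=
        eventually_of_mem (Ioi_mem_nhds (not_le.1 hxb)) fun y hy => hb y (le_of_lt hy)
      rw [this.deriv_eq, deriv_const]
  exact integral_of_hasDerivAt_of_tendsto
    (fun x => (hf.differentiable one_ne_zero x).hasDerivAt)
    ((hf.continuous_deriv le_rfl).integrable_of_hasCompactSupport hsupp)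
    (tendsto_const_nhds.congr' ((eventually_le_atBot a).mono fun x hx => (ha x hx).symm))
    (tendsto_const_nhds.congr' ((eventually_ge_atTop b).mono fun x hx => (hb x hx).symm))

end Integration

section HamiltonianCircleAction

variable {E : Type*} [NormedAddCommGroup E] [NormedSpace ℝ E]
  {M : Type*} [TopologicalSpace M] [ChartedSpace E M]
  {ω : ∀ x : M, TangentSpace 𝓘(ℝ, E) x →ₗ[ℝ] TangentSpace 𝓘(ℝ, E) x →ₗ[ℝ] ℝ}
  {a : ℝ → M → M} {μ : M → ℝ}

noncomputable def generatingField (a : ℝ → M → M) (x : M) : TangentSpace 𝓘(ℝ, E) x :=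
  mfderiv 𝓘(ℝ, ℝ) 𝓘(ℝ, E) (fun t => a t x) 0 (1 : ℝ)

theorem mfderiv_orbit_apply_one
    (horb : ∀ x, MDifferentiable 𝓘(ℝ, ℝ) 𝓘(ℝ, E) (fun t => a t x))
    (hadd : ∀ s t x, a (s + t) x = a s (a t x)) (x : M) (t : ℝ) :
    mfderiv 𝓘(ℝ, ℝ) 𝓘(ℝ, E) (fun s => a s x) t (1 : ℝ) = generatingField a (a t x) := by
  have hshift : (fun s => a s x) = (fun s => a s (a t x)) ∘ (fun s => s - t) := by
    funext s
    simp [← hadd]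
  have hsub : HasMFDerivAt 𝓘(ℝ, ℝ) 𝓘(ℝ, ℝ) (fun s : ℝ => s - t) t
      (ContinuousLinearMap.id ℝ ℝ) :=
    ((hasFDerivAt_id t).sub_const t).hasMFDerivAt
  have h := mfderiv_comp_apply_of_eq t (horb (a t x) 0) hsub.mdifferentiableAt (sub_self t)
    (1 : ℝ)
  rw [hsub.mfderiv] at h
  rw [hshift]
  exact h

theorem generatingField_eq_zero_of_mfderiv_eq_zero
    (hnondeg : ∀ x v, (∀ w, ω x v w = 0) → v = 0)
    (hmoment : ∀ x v, mfderiv 𝓘(ℝ, E) 𝓘(ℝ, ℝ) μ x v = -ω x (generatingField a x) v)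
    {x : M} (hx : mfderiv 𝓘(ℝ, E) 𝓘(ℝ, ℝ) μ x = 0) :
    generatingField a x = (0 : TangentSpace 𝓘(ℝ, E) x) :=
  hnondeg x _ fun w => by
    have h := hmoment x w
    rw [hx] at h
    exact neg_eq_zero.mp h.symm

theorem moment_apply_orbit [IsManifold 𝓘(ℝ, E) 1 M]
    (hanti : ∀ x v w, ω x v w = -ω x w v)
    (horb : ∀ x, MDifferentiable 𝓘(ℝ, ℝ) 𝓘(ℝ, E) (fun t => a t x))
    (hadd : ∀ s t x, a (s + t) x = a s (a t x)) (hzero : ∀ x, a 0 x = x)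
    (hμ : MDifferentiable 𝓘(ℝ, E) 𝓘(ℝ, ℝ) μ)
    (hmoment : ∀ x v, mfderiv 𝓘(ℝ, E) 𝓘(ℝ, ℝ) μ x v = -ω x (generatingField a x) v)
    (x : M) (t : ℝ) : μ (a t x) = μ x := by
  have hconst : IsLocallyConstant (μ ∘ fun t => a t x) := by
    refine isLocallyConstant_of_mfderiv_eq_zero (hμ.comp (horb x)) fun s => ?_
    refine ContinuousLinearMap.ext_ring ?_
    have h := mfderiv_comp_apply s (hμ _) (horb x s) (1 : ℝ)
    rw [mfderiv_orbit_apply_one horb hadd, hmoment] at h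
    have hXX : ω (a s x) (generatingField a (a s x)) (generatingField a (a s x)) = 0 := by
      linarith [hanti (a s x) (generatingField a (a s x)) (generatingField a (a s x))]
    rw [hXX, neg_zero] at h
    exact h
  simpa [hzero] using hconst.apply_eq_of_preconnectedSpace t 0

theorem orbit_eq_self_of_mfderiv_eq_zero [IsManifold 𝓘(ℝ, E) 1 M]
    (hnondeg : ∀ x v, (∀ w, ω x v w = 0) → v = 0)
    (horb : ∀ x, MDifferentiable 𝓘(ℝ, ℝ) 𝓘(ℝ, E) (fun t => a t x))
    (hadd : ∀ s t x, a (s + t) x = a s (a t x)) (hzero : ∀ x, a 0 x = x)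
    (hmoment : ∀ x v, mfderiv 𝓘(ℝ, E) 𝓘(ℝ, ℝ) μ x v = -ω x (generatingField a x) v)
    {x : M} (hx : ∀ t, mfderiv 𝓘(ℝ, E) 𝓘(ℝ, ℝ) μ (a t x) = 0) (t : ℝ) : a t x = x := by
  have hconst : IsLocallyConstant fun t => a t x := by
    refine isLocallyConstant_of_mfderiv_eq_zero (horb x) fun s => ?_
    refine ContinuousLinearMap.ext_ring ?_
    exact (mfderiv_orbit_apply_one horb hadd x s).trans
      (generatingField_eq_zero_of_mfderiv_eq_zero hnondeg hmoment (hx s))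
  simpa [hzero] using hconst.apply_eq_of_preconnectedSpace t 0

theorem orbit_eq_self_of_isExtrOn [IsManifold 𝓘(ℝ, E) 1 M]
    (hanti : ∀ x v w, ω x v w = -ω x w v)
    (hnondeg : ∀ x v, (∀ w, ω x v w = 0) → v = 0)
    (horb : ∀ x, MDifferentiable 𝓘(ℝ, ℝ) 𝓘(ℝ, E) (fun t => a t x))
    (hadd : ∀ s t x, a (s + t) x = a s (a t x)) (hzero : ∀ x, a 0 x = x)
    (hμ : MDifferentiable 𝓘(ℝ, E) 𝓘(ℝ, ℝ) μ)
    (hmoment : ∀ x v, mfderiv 𝓘(ℝ, E) 𝓘(ℝ, ℝ) μ x v = -ω x (generatingField a x) v)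
    {C : Set M} (hC : IsOpen C) {x : M} (hxC : ∀ t, a t x ∈ C) (hx : IsExtrOn μ C x)
    (t : ℝ) : a t x = x := by
  refine orbit_eq_self_of_mfderiv_eq_zero hnondeg horb hadd hzero hmoment (fun s => ?_) t
  have hs : IsExtrOn μ C (a s x) := by
    unfold IsExtrOn IsExtrFilter IsMinFilter IsMaxFilter at hx ⊢
    rwa [moment_apply_orbit hanti horb hadd hzero hμ hmoment]
  exact (hs.isLocalExtr (hC.mem_nhds (hxC s))).mfderiv_eq_zero

theorem exists_fixedPoints_moment_lt [IsManifold 𝓘(ℝ, E) 1 M] [CompactSpace M]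
    (hanti : ∀ x v w, ω x v w = -ω x w v)
    (hnondeg : ∀ x v, (∀ w, ω x v w = 0) → v = 0)
    (horb : ∀ x, MDifferentiable 𝓘(ℝ, ℝ) 𝓘(ℝ, E) (fun t => a t x))
    (hadd : ∀ s t x, a (s + t) x = a s (a t x)) (hzero : ∀ x, a 0 x = x)
    (hμ : MDifferentiable 𝓘(ℝ, E) 𝓘(ℝ, ℝ) μ)
    (hmoment : ∀ x v, mfderiv 𝓘(ℝ, E) 𝓘(ℝ, ℝ) μ x v = -ω x (generatingField a x) v)
    {t₀ : ℝ} {x₀ : M} (hx₀ : a t₀ x₀ ≠ x₀) :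
    ∃ p ∈ connectedComponent x₀, ∃ q ∈ connectedComponent x₀,
      (∀ t, a t p = p) ∧ (∀ t, a t q = q) ∧ μ p < μ q := by
  have : LocallyConnectedSpace M := ChartedSpace.locallyConnectedSpace E M
  set C := connectedComponent x₀
  have horbC : ∀ x ∈ C, ∀ t, a t x ∈ C := fun x hx t => by
    have := (isPreconnected_range (horb x).continuous).subset_connectedComponent
      ⟨0, hzero x⟩ ⟨t, rfl⟩
    rwa [← connectedComponent_eq hx] at this
  have hfix : ∀ x ∈ C, IsExtrOn μ C x → ∀ t, a t x = x := fun x hx hext =>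
    orbit_eq_self_of_isExtrOn hanti hnondeg horb hadd hzero hμ hmoment isOpen_connectedComponent
      (horbC x hx) hext
  obtain ⟨p, hpC, hpmin⟩ := isClosed_connectedComponent.isCompact.exists_isMinOn
    ⟨x₀, mem_connectedComponent⟩ hμ.continuous.continuousOn
  obtain ⟨q, hqC, hqmax⟩ := isClosed_connectedComponent.isCompact.exists_isMaxOn
    ⟨x₀, mem_connectedComponent⟩ hμ.continuous.continuousOn
  refine ⟨p, hpC, q, hqC, hfix p hpC hpmin.isExtr, hfix q hqC hqmax.isExtr, ?_⟩
  by_contra hle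
  -- if `μ` is constant on `C`, then every point of `C`, in particular `x₀`, is fixed
  have hx₀min : IsMinOn μ C x₀ := fun y hy =>
    (hqmax mem_connectedComponent).trans ((not_lt.1 hle).trans (hpmin hy))
  exact hx₀ (hfix x₀ mem_connectedComponent hx₀min.isExtr t₀)

variable {c : ℝ → M}

def orbitCylinder (a : ℝ → M → M) (c : ℝ → M) (z : ℝ × ℝ) : M := a z.2 (c z.1)

theorem contMDiff_orbitCylinder {n : WithTop ℕ∞}
    (ha : ContMDiff (𝓘(ℝ, ℝ).prod 𝓘(ℝ, E)) 𝓘(ℝ, E) n fun p : ℝ × M => a p.1 p.2)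
    (hc : ContMDiff 𝓘(ℝ, ℝ) 𝓘(ℝ, E) n c) :
    ContMDiff 𝓘(ℝ, ℝ × ℝ) 𝓘(ℝ, E) n (orbitCylinder a c) :=
  ha.comp ((contMDiff_iff_contDiff.2 contDiff_snd).prodMk
    (hc.comp (contMDiff_iff_contDiff.2 contDiff_fst)))

theorem tendsto_orbitCylinder {l : Filter ℝ} {p : M} (hc : ∀ᶠ s in l, c s = p)
    (hp : ∀ t, a t p = p) : Tendsto (orbitCylinder a c) (comap Prod.fst l) (𝓝 p) :=
  tendsto_const_nhds.congr' <| (hc.comap Prod.fst).mono fun z hz => by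
    simp [orbitCylinder, hz, hp]

theorem omega_mfderiv_orbitCylinder [IsManifold 𝓘(ℝ, E) 1 M]
    (hanti : ∀ x v w, ω x v w = -ω x w v)
    (horb : ∀ x, MDifferentiable 𝓘(ℝ, ℝ) 𝓘(ℝ, E) (fun t => a t x))
    (hadd : ∀ s t x, a (s + t) x = a s (a t x)) (hzero : ∀ x, a 0 x = x)
    (hμ : MDifferentiable 𝓘(ℝ, E) 𝓘(ℝ, ℝ) μ)
    (hmoment : ∀ x v, mfderiv 𝓘(ℝ, E) 𝓘(ℝ, ℝ) μ x v = -ω x (generatingField a x) v)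
    (hu : MDifferentiable 𝓘(ℝ, ℝ × ℝ) 𝓘(ℝ, E) (orbitCylinder a c)) (z : ℝ × ℝ) :
    ω (orbitCylinder a c z)
        (mfderiv 𝓘(ℝ, ℝ × ℝ) 𝓘(ℝ, E) (orbitCylinder a c) z ((1 : ℝ), (0 : ℝ)))
        (mfderiv 𝓘(ℝ, ℝ × ℝ) 𝓘(ℝ, E) (orbitCylinder a c) z ((0 : ℝ), (1 : ℝ)))
      = deriv (μ ∘ c) z.1 := by
  obtain ⟨s, t⟩ := z
  have hslice : MDifferentiableAt 𝓘(ℝ, ℝ) 𝓘(ℝ, E) (fun σ => a t (c σ)) s :=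
    (hu _).comp s (hasFDerivAt_prodMk_left (𝕜 := ℝ) s t).hasMFDerivAt.mdifferentiableAt
  have hinv : μ ∘ (fun σ => a t (c σ)) = μ ∘ c :=
    funext fun σ => moment_apply_orbit hanti horb hadd hzero hμ hmoment (c σ) t
  rw [(hu _).mfderiv_apply_inl, (hu _).mfderiv_apply_inr]
  change ω (a t (c s)) (mfderiv 𝓘(ℝ, ℝ) 𝓘(ℝ, E) (fun σ => a t (c σ)) s (1 : ℝ))
    (mfderiv 𝓘(ℝ, ℝ) 𝓘(ℝ, E) (fun τ => a τ (c s)) t (1 : ℝ)) = _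
  rw [mfderiv_orbit_apply_one horb hadd, hanti, ← hmoment]
  refine (mfderiv_comp_apply s (hμ _) hslice (1 : ℝ)).symm.trans ?_
  rw [hinv, mfderiv_eq_fderiv]
  rfl

end HamiltonianCircleAction

theorem hamiltonian_circle_action_positive_spherical_area_general
    {E : Type*} [NormedAddCommGroup E] [NormedSpace ℝ E]
    {M : Type*} [TopologicalSpace M] [ChartedSpace E M]
    [IsManifold 𝓘(ℝ, E) (⊤ : ℕ∞) M] [CompactSpace M]
    (ω : ∀ x : M, TangentSpace 𝓘(ℝ, E) x →ₗ[ℝ] TangentSpace 𝓘(ℝ, E) x →ₗ[ℝ] ℝ)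
    (hanti : ∀ x v w, ω x v w = - ω x w v)
    (hnondeg : ∀ x v, (∀ w, ω x v w = 0) → v = 0)
    (a : ℝ → M → M)
    (hasm : ContMDiff ((𝓘(ℝ, ℝ)).prod 𝓘(ℝ, E)) 𝓘(ℝ, E) (⊤ : ℕ∞)
      (fun p : ℝ × M => a p.1 p.2))
    (hadd : ∀ s t x, a (s + t) x = a s (a t x))
    (hzero : ∀ x, a 0 x = x)
    (hper : ∀ t x, a (t + 1) x = a t x)
    (hnontriv : ∃ t x, a t x ≠ x)
    (μ : M → ℝ)
    (hμsm : ContMDiff 𝓘(ℝ, E) 𝓘(ℝ, ℝ) (⊤ : ℕ∞) μ)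
    (hmoment : ∀ (x : M) (v : TangentSpace 𝓘(ℝ, E) x),
      mfderiv 𝓘(ℝ, E) 𝓘(ℝ, ℝ) μ x v
        = - ω x (mfderiv 𝓘(ℝ, ℝ) 𝓘(ℝ, E) (fun t => a t x) 0 ((1 : ℝ) : TangentSpace 𝓘(ℝ, ℝ) (0 : ℝ))) v) :
    ∃ (u : ℝ × ℝ → M) (p q : M),
      ContMDiff (𝓘(ℝ, ℝ × ℝ)) 𝓘(ℝ, E) (⊤ : ℕ∞) u ∧
      (∀ s t : ℝ, u (s, t + 1) = u (s, t)) ∧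
      Tendsto u (Filter.comap Prod.fst atBot) (nhds p) ∧
      Tendsto u (Filter.comap Prod.fst atTop) (nhds q) ∧
      0 < ∫ z in (Set.univ : Set ℝ) ×ˢ Set.Ioc (0:ℝ) 1,
          ω (u z)
            (mfderiv (𝓘(ℝ, ℝ × ℝ)) 𝓘(ℝ, E) u z ((1 : ℝ), (0 : ℝ)))
            (mfderiv (𝓘(ℝ, ℝ × ℝ)) 𝓘(ℝ, E) u z ((0 : ℝ), (1 : ℝ))) := by
  have horb : ∀ x, MDifferentiable 𝓘(ℝ, ℝ) 𝓘(ℝ, E) (fun t => a t x) := fun x =>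
    (hasm.comp (contMDiff_id.prodMk contMDiff_const)).mdifferentiable (by simp)
  have hμ : MDifferentiable 𝓘(ℝ, E) 𝓘(ℝ, ℝ) μ := hμsm.mdifferentiable (by simp)
  obtain ⟨t₀, x₀, hx₀⟩ := hnontriv
  obtain ⟨p, hp, q, hq, hpfix, hqfix, hlt⟩ :=
    exists_fixedPoints_moment_lt hanti hnondeg horb hadd hzero hμ hmoment hx₀
  obtain ⟨c, hc, hcp, hcq⟩ :=
    isPreconnected_connectedComponent.joinedBySmoothFlatPath (E := E) hp hq
  have hu := contMDiff_orbitCylinder hasm hc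
  refine ⟨orbitCylinder a c, p, q, hu, fun s t => hper t (c s),
    tendsto_orbitCylinder ((eventually_le_atBot 0).mono hcp) hpfix,
    tendsto_orbitCylinder ((eventually_ge_atTop 1).mono hcq) hqfix, ?_⟩
  have hμc : ContDiff ℝ 1 (μ ∘ c) :=
    (contMDiff_iff_contDiff.1 (hμsm.comp hc)).of_le (by exact_mod_cast le_top)
  simp_rw [omega_mfderiv_orbitCylinder hanti horb hadd hzero hμ hmoment
    (hu.mdifferentiable (by simp))]
  rw [setIntegral_univ_prod_fst, integral_deriv_eq_sub_of_forall_le_of_forall_ge hμc 0 1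
    (fun x hx => by simp [hcp x hx, hcp 0 le_rfl]) (fun x hx => by simp [hcq x hx, hcq 1 le_rfl])]
  simpa [hcp 0 le_rfl, hcq 1 le_rfl] using hlt

/-- Let `(M, ω)` be a closed symplectic manifold (here: a compact
boundaryless smooth manifold with a smooth nondegenerate antisymmetric `2`-form `ω`,
smoothness expressed by smoothness of all pullbacks along smooth maps), carrying a
nontrivial Hamiltonian `S¹`-action `a : ℝ → M → M` (smooth, additive, `1`-periodic)
with moment map `μ : M → ℝ` satisfying `dμ = -ι_X ω` for the generating vector field
`X x = (d/dt)|₀ a t x`.  Then there exists a spherical class with positive symplectic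
area: a smooth map `u` of the cylinder `ℝ × ℝ/ℤ` into `M` converging at both ends
(hence representing a class `α ∈ π₂(M)`) such that `∫ u*ω > 0`.  In particular a
closed symplectically aspherical manifold admits no nontrivial Hamiltonian
`S¹`-action. -/
theorem hamiltonian_circle_action_positive_spherical_area
    {E : Type*} [NormedAddCommGroup E] [NormedSpace ℝ E] [FiniteDimensional ℝ E]
    {M : Type*} [TopologicalSpace M] [ChartedSpace E M]
    [IsManifold 𝓘(ℝ, E) (⊤ : ℕ∞) M] [CompactSpace M] [T2Space M]
    (ω : ∀ x : M, TangentSpace 𝓘(ℝ, E) x →ₗ[ℝ] TangentSpace 𝓘(ℝ, E) x →ₗ[ℝ] ℝ)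
    (hanti : ∀ x v w, ω x v w = - ω x w v)
    (hnondeg : ∀ x v, (∀ w, ω x v w = 0) → v = 0)
    (hωsmooth : ∀ (n : ℕ) (f : EuclideanSpace ℝ (Fin n) → M),
      ContMDiff 𝓘(ℝ, EuclideanSpace ℝ (Fin n)) 𝓘(ℝ, E) (⊤ : ℕ∞) f →
      ∀ X Y : EuclideanSpace ℝ (Fin n),
        ContMDiff 𝓘(ℝ, EuclideanSpace ℝ (Fin n)) 𝓘(ℝ, ℝ) (⊤ : ℕ∞)
          (fun z => ω (f z)
            (mfderiv 𝓘(ℝ, EuclideanSpace ℝ (Fin n)) 𝓘(ℝ, E) f z X)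
            (mfderiv 𝓘(ℝ, EuclideanSpace ℝ (Fin n)) 𝓘(ℝ, E) f z Y)))
    (a : ℝ → M → M)
    (hasm : ContMDiff ((𝓘(ℝ, ℝ)).prod 𝓘(ℝ, E)) 𝓘(ℝ, E) (⊤ : ℕ∞)
      (fun p : ℝ × M => a p.1 p.2))
    (hadd : ∀ s t x, a (s + t) x = a s (a t x))
    (hzero : ∀ x, a 0 x = x)
    (hper : ∀ t x, a (t + 1) x = a t x)
    (hnontriv : ∃ t x, a t x ≠ x)
    (μ : M → ℝ)
    (hμsm : ContMDiff 𝓘(ℝ, E) 𝓘(ℝ, ℝ) (⊤ : ℕ∞) μ)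
    (hmoment : ∀ (x : M) (v : TangentSpace 𝓘(ℝ, E) x),
      mfderiv 𝓘(ℝ, E) 𝓘(ℝ, ℝ) μ x v
        = - ω x (mfderiv 𝓘(ℝ, ℝ) 𝓘(ℝ, E) (fun t => a t x) 0 ((1 : ℝ) : TangentSpace 𝓘(ℝ, ℝ) (0 : ℝ))) v) :
    ∃ (u : ℝ × ℝ → M) (p q : M),
      ContMDiff (𝓘(ℝ, ℝ × ℝ)) 𝓘(ℝ, E) (⊤ : ℕ∞) u ∧
      (∀ s t : ℝ, u (s, t + 1) = u (s, t)) ∧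
      Tendsto u (Filter.comap Prod.fst atBot) (nhds p) ∧
      Tendsto u (Filter.comap Prod.fst atTop) (nhds q) ∧
      0 < ∫ z in (Set.univ : Set ℝ) ×ˢ Set.Ioc (0:ℝ) 1,
          ω (u z)
            (mfderiv (𝓘(ℝ, ℝ × ℝ)) 𝓘(ℝ, E) u z ((1 : ℝ), (0 : ℝ)))
            (mfderiv (𝓘(ℝ, ℝ × ℝ)) 𝓘(ℝ, E) u z ((0 : ℝ), (1 : ℝ))) :=
  hamiltonian_circle_action_positive_spherical_area_general ω hanti hnondeg a hasm hadd hzero hper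
    hnontriv μ hμsm hmoment
end

section
/- Let the torus T act diagonally on ℂ^N with weights w₁,…,w_N and let ρ̇(ξ) = 2πi·diag(⟨w_ν,ξ⟩). In a local holomorphic chart with connection coefficients φ, ψ : U → t, set ∇_s = ∂_s − ρ̇(φ), ∇_t = ∂_t − ρ̇(ψ). If u : U → ℂ^N satisfies ∇_s u + i∇_t u = 0, then (1/2)Δ|u|² ≥ ⟨u, i(ρ̇(∂_sψ) − ρ̇(∂_tφ)) u⟩ = −2⟨μ(u), ∂_sψ − ∂_tφ⟩, where μ(u) = π Σ_ν |u_ν|² w_ν and Δ = ∂_s∂_s + ∂_t∂_t. -/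
open scoped RealInnerProductSpace

open Complex in
lemma vortex_key (u us ut uss ust utt : ℂ) (A B As At Bs Bt : ℝ)
    (H0 : (us - I*A*u) + I*(ut - I*B*u) = 0)
    (H1 : (uss - (I*As*u + I*A*us)) + I*(ust - (I*Bs*u + I*B*us)) = 0)
    (H2 : (ust - (I*At*u + I*A*ut)) + I*(utt - (I*Bt*u + I*B*ut)) = 0) :
    Complex.normSq us + Complex.normSq ut
      + ((starRingEnd ℂ) u * (uss + utt)).re - (At - Bs) * Complex.normSq u
    = Complex.normSq (us - I*A*u) + Complex.normSq (ut - I*B*u) := by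
  have h1 : uss + utt = (I*As - Bs + At + I*Bt)*u + (I*A - B)*(us - I*ut) := by
    linear_combination H1 - Complex.I * H2
      + (utt - At*u + Bs*u + B*us - I*(Bt*u + B*ut)) * Complex.I_sq
  have h0 : us = I*A*u - B*u - I*ut := by
    linear_combination H0 + (B*u) * Complex.I_sq
  rw [h1, h0]
  simp only [Complex.normSq_apply, Complex.mul_re, Complex.mul_im, Complex.add_re,
    Complex.add_im, Complex.sub_re, Complex.sub_im, Complex.I_re, Complex.I_im,
    Complex.ofReal_re, Complex.ofReal_im, Complex.conj_re, Complex.conj_im]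
  ring

lemma norm_sq_snd_deriv {E : Type*} [NormedAddCommGroup E] [InnerProductSpace ℝ E]
    (u : ℝ × ℝ → E) (U : Set (ℝ × ℝ)) (hU : IsOpen U) (hu : ContDiffOn ℝ (⊤ : ℕ∞) u U)
    {z : ℝ × ℝ} (hz : z ∈ U) (e : ℝ × ℝ) :
    fderiv ℝ (fun y => fderiv ℝ (fun p => ‖u p‖ ^ 2) y e) z e
      = 2 * (⟪fderiv ℝ u z e, fderiv ℝ u z e⟫
          + ⟪u z, fderiv ℝ (fun y => fderiv ℝ u y e) z e⟫) := by
  have hUz := hU.mem_nhds hz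
  have hud : ∀ y ∈ U, DifferentiableAt ℝ u y := fun y hy =>
    (hu.contDiffAt (hU.mem_nhds hy)).differentiableAt (by simp)
  have h1 : ∀ y ∈ U, fderiv ℝ (fun p => ‖u p‖ ^ 2) y e = 2 * ⟪u y, fderiv ℝ u y e⟫ := by
    intro y hy
    rw [((hud y hy).hasFDerivAt.norm_sq).fderiv]
    simp [two_smul]; ring
  have heq : fderiv ℝ (fun y => fderiv ℝ (fun p => ‖u p‖ ^ 2) y e) z
      = fderiv ℝ (fun y => 2 * ⟪u y, fderiv ℝ u y e⟫) z := by
    apply Filter.EventuallyEq.fderiv_eq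
    filter_upwards [hUz] with y hy using h1 y hy
  have hu' : ContDiffOn ℝ (⊤ : ℕ∞) (fun y => fderiv ℝ u y) U := hu.fderiv_of_isOpen hU (by simp)
  have hd2 : DifferentiableAt ℝ (fun y => fderiv ℝ u y e) z :=
    ((hu'.contDiffAt hUz).differentiableAt (by simp)).clm_apply (differentiableAt_const e)
  rw [heq, fderiv_const_mul ((hud z hz).inner ℝ hd2) 2]
  simp only [ContinuousLinearMap.smul_apply, smul_eq_mul]
  rw [fderiv_inner_apply ℝ (hud z hz) hd2 e]
  ring

/-- Differentiating the Cauchy–Riemann relation in direction `e`. -/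
lemma CR_deriv {k N : ℕ} (w : Fin N → EuclideanSpace ℝ (Fin k))
    {U : Set (ℝ × ℝ)} (hU : IsOpen U)
    (u : ℝ × ℝ → EuclideanSpace ℂ (Fin N))
    (φ ψ : ℝ × ℝ → EuclideanSpace ℝ (Fin k))
    (hu : ContDiffOn ℝ (⊤ : ℕ∞) u U) (hφ : ContDiffOn ℝ (⊤ : ℕ∞) φ U) (hψ : ContDiffOn ℝ (⊤ : ℕ∞) ψ U)
    (hCR : ∀ z ∈ U, ∀ ν : Fin N,
      (fderiv ℝ u z ((1 : ℝ), (0 : ℝ)) ν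
          - (2 * Real.pi * Complex.I * ((⟪w ν, φ z⟫ : ℝ) : ℂ)) * u z ν)
        + Complex.I * (fderiv ℝ u z ((0 : ℝ), (1 : ℝ)) ν
          - (2 * Real.pi * Complex.I * ((⟪w ν, ψ z⟫ : ℝ) : ℂ)) * u z ν) = 0)
    {z : ℝ × ℝ} (hz : z ∈ U) (ν : Fin N) (e : ℝ × ℝ) :
    (fderiv ℝ (fderiv ℝ u) z e ((1:ℝ), (0:ℝ)) ν
        - ((2 * Real.pi * Complex.I * ((⟪w ν, fderiv ℝ φ z e⟫ : ℝ) : ℂ)) * u z ν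
            + (2 * Real.pi * Complex.I * ((⟪w ν, φ z⟫ : ℝ) : ℂ)) * fderiv ℝ u z e ν))
      + Complex.I * (fderiv ℝ (fderiv ℝ u) z e ((0:ℝ), (1:ℝ)) ν
        - ((2 * Real.pi * Complex.I * ((⟪w ν, fderiv ℝ ψ z e⟫ : ℝ) : ℂ)) * u z ν
            + (2 * Real.pi * Complex.I * ((⟪w ν, ψ z⟫ : ℝ) : ℂ)) * fderiv ℝ u z e ν)) = 0 := by
  have hUz := hU.mem_nhds hz
  have hud : DifferentiableAt ℝ u z := (hu.contDiffAt hUz).differentiableAt (by simp)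
  have hu' : ContDiffOn ℝ (⊤ : ℕ∞) (fun y => fderiv ℝ u y) U := hu.fderiv_of_isOpen hU (by simp)
  have hu'd : DifferentiableAt ℝ (fun y => fderiv ℝ u y) z :=
    (hu'.contDiffAt hUz).differentiableAt (by simp)
  have hde : ∀ e', DifferentiableAt ℝ (fun y => fderiv ℝ u y e') z := fun e' =>
    hu'd.clm_apply (differentiableAt_const e')
  have hD2 : ∀ e₀ e', fderiv ℝ (fun y => fderiv ℝ u y e₀) z e'
      = fderiv ℝ (fderiv ℝ u) z e' e₀ := by
    intro e₀ e'
    rw [fderiv_clm_apply hu'd (differentiableAt_const e₀)]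
    simp
  have hφd : DifferentiableAt ℝ φ z := (hφ.contDiffAt hUz).differentiableAt (by simp)
  have hψd : DifferentiableAt ℝ ψ z := (hψ.contDiffAt hUz).differentiableAt (by simp)
  set Lν : EuclideanSpace ℂ (Fin N) →L[ℝ] ℂ :=
    (EuclideanSpace.proj (𝕜 := ℂ) ν).restrictScalars ℝ with hLν
  set Lw : EuclideanSpace ℝ (Fin k) →L[ℝ] ℂ :=
    Complex.ofRealCLM.comp (innerSL ℝ (w ν)) with hLw
  -- component of u
  have hQ : HasFDerivAt (fun y => u y ν) (Lν.comp (fderiv ℝ u z)) z :=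
    Lν.hasFDerivAt.comp z hud.hasFDerivAt
  have dQ : fderiv ℝ (fun y => u y ν) z e = fderiv ℝ u z e ν := by rw [hQ.fderiv]; rfl
  -- components of fderiv u
  have hP : ∀ e₀, HasFDerivAt (fun y => fderiv ℝ u y e₀ ν)
      (Lν.comp (fderiv ℝ (fun y => fderiv ℝ u y e₀) z)) z := fun e₀ =>
    Lν.hasFDerivAt.comp z (hde e₀).hasFDerivAt
  have dP : ∀ e₀, fderiv ℝ (fun y => fderiv ℝ u y e₀ ν) z e
      = fderiv ℝ (fderiv ℝ u) z e e₀ ν := by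
    intro e₀
    rw [(hP e₀).fderiv]
    show Lν (fderiv ℝ (fun y => fderiv ℝ u y e₀) z e) = _
    rw [hD2]
    rfl
  -- the coefficient functions
  have hca : HasFDerivAt (fun y => ((⟪w ν, φ y⟫ : ℝ) : ℂ)) (Lw.comp (fderiv ℝ φ z)) z :=
    Lw.hasFDerivAt.comp z hφd.hasFDerivAt
  have hcb : HasFDerivAt (fun y => ((⟪w ν, ψ y⟫ : ℝ) : ℂ)) (Lw.comp (fderiv ℝ ψ z)) z :=
    Lw.hasFDerivAt.comp z hψd.hasFDerivAt
  have dca : fderiv ℝ (fun y => ((⟪w ν, φ y⟫ : ℝ) : ℂ)) z e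
      = ((⟪w ν, fderiv ℝ φ z e⟫ : ℝ) : ℂ) := by
    rw [hca.fderiv]; rfl
  have dcb : fderiv ℝ (fun y => ((⟪w ν, ψ y⟫ : ℝ) : ℂ)) z e
      = ((⟪w ν, fderiv ℝ ψ z e⟫ : ℝ) : ℂ) := by
    rw [hcb.fderiv]; rfl
  -- products
  have hcad : DifferentiableAt ℝ (fun y => 2 * Real.pi * Complex.I * ((⟪w ν, φ y⟫ : ℝ) : ℂ)) z :=
    hca.differentiableAt.const_mul _
  have hcbd : DifferentiableAt ℝ (fun y => 2 * Real.pi * Complex.I * ((⟪w ν, ψ y⟫ : ℝ) : ℂ)) z :=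
    hcb.differentiableAt.const_mul _
  have hM1d : DifferentiableAt ℝ
      (fun y => (2 * Real.pi * Complex.I * ((⟪w ν, φ y⟫ : ℝ) : ℂ)) * u y ν) z :=
    hcad.mul hQ.differentiableAt
  have hM2d : DifferentiableAt ℝ
      (fun y => (2 * Real.pi * Complex.I * ((⟪w ν, ψ y⟫ : ℝ) : ℂ)) * u y ν) z :=
    hcbd.mul hQ.differentiableAt
  have dM1 : fderiv ℝ (fun y => (2 * Real.pi * Complex.I * ((⟪w ν, φ y⟫ : ℝ) : ℂ)) * u y ν) z e
      = (2 * Real.pi * Complex.I * ((⟪w ν, φ z⟫ : ℝ) : ℂ)) * fderiv ℝ u z e ν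
        + (2 * Real.pi * Complex.I * ((⟪w ν, fderiv ℝ φ z e⟫ : ℝ) : ℂ)) * u z ν := by
    rw [fderiv_fun_mul hcad hQ.differentiableAt]
    simp only [ContinuousLinearMap.add_apply, ContinuousLinearMap.smul_apply, smul_eq_mul]
    rw [fderiv_const_mul hca.differentiableAt]
    simp only [ContinuousLinearMap.smul_apply, smul_eq_mul]
    rw [dQ, dca]
    ring
  have dM2 : fderiv ℝ (fun y => (2 * Real.pi * Complex.I * ((⟪w ν, ψ y⟫ : ℝ) : ℂ)) * u y ν) z e
      = (2 * Real.pi * Complex.I * ((⟪w ν, ψ z⟫ : ℝ) : ℂ)) * fderiv ℝ u z e ν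
        + (2 * Real.pi * Complex.I * ((⟪w ν, fderiv ℝ ψ z e⟫ : ℝ) : ℂ)) * u z ν := by
    rw [fderiv_fun_mul hcbd hQ.differentiableAt]
    simp only [ContinuousLinearMap.add_apply, ContinuousLinearMap.smul_apply, smul_eq_mul]
    rw [fderiv_const_mul hcb.differentiableAt]
    simp only [ContinuousLinearMap.smul_apply, smul_eq_mul]
    rw [dQ, dcb]
    ring
  -- the CR function is identically zero on U, so its derivative vanishes
  have h0 : fderiv ℝ (fun y =>
      (fderiv ℝ u y ((1:ℝ), (0:ℝ)) ν
          - (2 * Real.pi * Complex.I * ((⟪w ν, φ y⟫ : ℝ) : ℂ)) * u y ν)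
        + Complex.I * (fderiv ℝ u y ((0:ℝ), (1:ℝ)) ν
          - (2 * Real.pi * Complex.I * ((⟪w ν, ψ y⟫ : ℝ) : ℂ)) * u y ν)) z e = 0 := by
    have hev : (fun y =>
        (fderiv ℝ u y ((1:ℝ), (0:ℝ)) ν
            - (2 * Real.pi * Complex.I * ((⟪w ν, φ y⟫ : ℝ) : ℂ)) * u y ν)
          + Complex.I * (fderiv ℝ u y ((0:ℝ), (1:ℝ)) ν
            - (2 * Real.pi * Complex.I * ((⟪w ν, ψ y⟫ : ℝ) : ℂ)) * u y ν))
        =ᶠ[nhds z] (fun _ => (0 : ℂ)) := by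
      filter_upwards [hUz] with y hy using hCR y hy ν
    rw [hev.fderiv_eq]
    simp
  -- expand the derivative
  have hg1d : DifferentiableAt ℝ (fun y => fderiv ℝ u y ((1:ℝ), (0:ℝ)) ν
      - (2 * Real.pi * Complex.I * ((⟪w ν, φ y⟫ : ℝ) : ℂ)) * u y ν) z :=
    (hP _).differentiableAt.sub hM1d
  have hg2d : DifferentiableAt ℝ (fun y => fderiv ℝ u y ((0:ℝ), (1:ℝ)) ν
      - (2 * Real.pi * Complex.I * ((⟪w ν, ψ y⟫ : ℝ) : ℂ)) * u y ν) z :=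
    (hP _).differentiableAt.sub hM2d
  rw [fderiv_fun_add hg1d (hg2d.const_mul Complex.I)] at h0
  simp only [ContinuousLinearMap.add_apply] at h0
  rw [fderiv_fun_sub (hP _).differentiableAt hM1d, fderiv_const_mul hg2d Complex.I] at h0
  simp only [ContinuousLinearMap.sub_apply, ContinuousLinearMap.smul_apply, smul_eq_mul] at h0
  rw [fderiv_fun_sub (hP _).differentiableAt hM2d] at h0
  simp only [ContinuousLinearMap.sub_apply] at h0
  rw [dP, dP, dM1, dM2] at h0
  linear_combination h0

/-- Local computation for the deformed vortex equations.  Let the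
torus act diagonally on `ℂ^N` with weights `w ν`, so that `ρ̇(ζ) = 2πi diag(⟨w ν, ζ⟩)`.
On an open set `U` of a holomorphic chart with connection coefficients `φ, ψ : U → t`,
set `∇_s = ∂_s - ρ̇(φ)`, `∇_t = ∂_t - ρ̇(ψ)` (written below componentwise).  If
`u : U → ℂ^N` satisfies the Cauchy–Riemann equation `∇_s u + i ∇_t u = 0`, then at
every point of `U`

`(1/2) Δ|u|² ≥ ⟨u, i (ρ̇(∂_s ψ) - ρ̇(∂_t φ)) u⟩ = -2 ⟨μ(u), ∂_s ψ - ∂_t φ⟩`,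

where `⟨·,·⟩` on `ℂ^N` is the standard real inner product (`Re ∑ conj(u ν)·(·)`),
`μ(u) = π ∑ ν |u ν|² • w ν`, and `Δ = ∂_s ∂_s + ∂_t ∂_t`. -/
theorem vortex_local_laplacian_estimate
    (k N : ℕ) (w : Fin N → EuclideanSpace ℝ (Fin k))
    (U : Set (ℝ × ℝ)) (hU : IsOpen U)
    (u : ℝ × ℝ → EuclideanSpace ℂ (Fin N))
    (φ ψ : ℝ × ℝ → EuclideanSpace ℝ (Fin k))
    (hu : ContDiffOn ℝ (⊤ : ℕ∞) u U) (hφ : ContDiffOn ℝ (⊤ : ℕ∞) φ U) (hψ : ContDiffOn ℝ (⊤ : ℕ∞) ψ U)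
    (hCR : ∀ z ∈ U, ∀ ν : Fin N,
      (fderiv ℝ u z ((1 : ℝ), (0 : ℝ)) ν
          - (2 * Real.pi * Complex.I * ((⟪w ν, φ z⟫ : ℝ) : ℂ)) * u z ν)
        + Complex.I * (fderiv ℝ u z ((0 : ℝ), (1 : ℝ)) ν
          - (2 * Real.pi * Complex.I * ((⟪w ν, ψ z⟫ : ℝ) : ℂ)) * u z ν) = 0) :
    ∀ z ∈ U,
      ((1 / 2) * (fderiv ℝ (fun y => fderiv ℝ (fun p => ‖u p‖ ^ 2) y ((1:ℝ), (0:ℝ))) z ((1:ℝ), (0:ℝ))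
          + fderiv ℝ (fun y => fderiv ℝ (fun p => ‖u p‖ ^ 2) y ((0:ℝ), (1:ℝ))) z ((0:ℝ), (1:ℝ)))
        ≥ (∑ ν, (starRingEnd ℂ) (u z ν) *
            (Complex.I * ((2 * Real.pi * Complex.I *
              (((⟪w ν, fderiv ℝ ψ z ((1:ℝ), (0:ℝ)) - fderiv ℝ φ z ((0:ℝ), (1:ℝ))⟫ : ℝ)) : ℂ))
                * u z ν))).re) ∧
      ((∑ ν, (starRingEnd ℂ) (u z ν) *
            (Complex.I * ((2 * Real.pi * Complex.I *
              (((⟪w ν, fderiv ℝ ψ z ((1:ℝ), (0:ℝ)) - fderiv ℝ φ z ((0:ℝ), (1:ℝ))⟫ : ℝ)) : ℂ))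
                * u z ν))).re
        = -2 * (⟪Real.pi • ∑ ν, (‖u z ν‖ ^ 2) • w ν,
            fderiv ℝ ψ z ((1:ℝ), (0:ℝ)) - fderiv ℝ φ z ((0:ℝ), (1:ℝ))⟫ : ℝ)) := by
  intro z hz
  have hUz := hU.mem_nhds hz
  -- pointwise real-part computations
  have hconj : ∀ c : ℂ, ((starRingEnd ℂ) c * c).re = Complex.normSq c := fun c => by
    simp [Complex.mul_re, Complex.normSq_apply, Complex.conj_re, Complex.conj_im]
  have hpt : ∀ (a : ℂ) (c : ℝ),
      ((starRingEnd ℂ) a * (Complex.I * ((2 * Real.pi * Complex.I * (c:ℂ)) * a))).re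
        = -(2 * Real.pi * c) * Complex.normSq a := fun a c => by
    simp only [Complex.mul_re, Complex.mul_im, Complex.normSq_apply, Complex.I_re,
      Complex.I_im, Complex.ofReal_re, Complex.ofReal_im, Complex.conj_re, Complex.conj_im]
    simp [Complex.mul_re, Complex.mul_im]
    ring
  have hns : ∀ a : ℂ, ‖a‖ ^ 2 = Complex.normSq a := fun a => by
    rw [Complex.sq_norm]
  -- real inner product on EuclideanSpace ℂ
  have hinner : ∀ x y : EuclideanSpace ℂ (Fin N),
      (⟪x, y⟫ : ℝ) = ∑ ν, ((starRingEnd ℂ) (x ν) * y ν).re := fun x y => by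
    simp [PiLp.inner_apply]; exact Finset.sum_congr rfl fun _ _ => by ring
  -- second derivative data
  have hu' : ContDiffOn ℝ (⊤ : ℕ∞) (fun y => fderiv ℝ u y) U := hu.fderiv_of_isOpen hU (by simp)
  have hu'd : DifferentiableAt ℝ (fun y => fderiv ℝ u y) z :=
    (hu'.contDiffAt hUz).differentiableAt (by simp)
  have hD2 : ∀ e₀ e', fderiv ℝ (fun y => fderiv ℝ u y e₀) z e'
      = fderiv ℝ (fderiv ℝ u) z e' e₀ := by
    intro e₀ e'
    rw [fderiv_clm_apply hu'd (differentiableAt_const e₀)]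
    simp
  have hsymm : fderiv ℝ (fderiv ℝ u) z ((0:ℝ), (1:ℝ)) ((1:ℝ), (0:ℝ))
      = fderiv ℝ (fderiv ℝ u) z ((1:ℝ), (0:ℝ)) ((0:ℝ), (1:ℝ)) :=
    ((hu.contDiffAt hUz).isSymmSndFDerivAt (by rw [minSmoothness_of_isRCLikeNormedField]; exact (WithTop.coe_le_coe.2 (le_top : (2 : ℕ∞) ≤ ⊤)))).eq _ _
  have hL1 := norm_sq_snd_deriv u U hU hu hz ((1:ℝ), (0:ℝ))
  have hL2 := norm_sq_snd_deriv u U hU hu hz ((0:ℝ), (1:ℝ))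
  rw [hD2] at hL1 hL2
  -- the per-component key inequality
  have hkey : ∀ ν : Fin N,
      ((starRingEnd ℂ) (u z ν) * (Complex.I * ((2 * Real.pi * Complex.I *
          (((⟪w ν, fderiv ℝ ψ z ((1:ℝ), (0:ℝ)) - fderiv ℝ φ z ((0:ℝ), (1:ℝ))⟫ : ℝ)) : ℂ))
            * u z ν))).re
      ≤ ((starRingEnd ℂ) (fderiv ℝ u z ((1:ℝ), (0:ℝ)) ν) * fderiv ℝ u z ((1:ℝ), (0:ℝ)) ν).re
        + ((starRingEnd ℂ) (u z ν)
            * fderiv ℝ (fderiv ℝ u) z ((1:ℝ), (0:ℝ)) ((1:ℝ), (0:ℝ)) ν).re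
        + (((starRingEnd ℂ) (fderiv ℝ u z ((0:ℝ), (1:ℝ)) ν) * fderiv ℝ u z ((0:ℝ), (1:ℝ)) ν).re
          + ((starRingEnd ℂ) (u z ν)
            * fderiv ℝ (fderiv ℝ u) z ((0:ℝ), (1:ℝ)) ((0:ℝ), (1:ℝ)) ν).re) := by
    intro ν
    have H0 : (fderiv ℝ u z ((1:ℝ), (0:ℝ)) ν
          - Complex.I * ((2 * Real.pi * ⟪w ν, φ z⟫ : ℝ) : ℂ) * u z ν)
        + Complex.I * (fderiv ℝ u z ((0:ℝ), (1:ℝ)) ν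
          - Complex.I * ((2 * Real.pi * ⟪w ν, ψ z⟫ : ℝ) : ℂ) * u z ν) = 0 := by
      have h := hCR z hz ν
      push_cast at h ⊢
      linear_combination h
    have hC1 := CR_deriv w hU u φ ψ hu hφ hψ hCR hz ν ((1:ℝ), (0:ℝ))
    have hC2 := CR_deriv w hU u φ ψ hu hφ hψ hCR hz ν ((0:ℝ), (1:ℝ))
    rw [hsymm] at hC2
    have H1 : (fderiv ℝ (fderiv ℝ u) z ((1:ℝ), (0:ℝ)) ((1:ℝ), (0:ℝ)) ν
          - (Complex.I * ((2 * Real.pi * ⟪w ν, fderiv ℝ φ z ((1:ℝ), (0:ℝ))⟫ : ℝ) : ℂ) * u z ν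
            + Complex.I * ((2 * Real.pi * ⟪w ν, φ z⟫ : ℝ) : ℂ)
              * fderiv ℝ u z ((1:ℝ), (0:ℝ)) ν))
        + Complex.I * (fderiv ℝ (fderiv ℝ u) z ((1:ℝ), (0:ℝ)) ((0:ℝ), (1:ℝ)) ν
          - (Complex.I * ((2 * Real.pi * ⟪w ν, fderiv ℝ ψ z ((1:ℝ), (0:ℝ))⟫ : ℝ) : ℂ) * u z ν
            + Complex.I * ((2 * Real.pi * ⟪w ν, ψ z⟫ : ℝ) : ℂ)
              * fderiv ℝ u z ((1:ℝ), (0:ℝ)) ν)) = 0 := by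
      push_cast at hC1 ⊢
      linear_combination hC1
    have H2 : (fderiv ℝ (fderiv ℝ u) z ((1:ℝ), (0:ℝ)) ((0:ℝ), (1:ℝ)) ν
          - (Complex.I * ((2 * Real.pi * ⟪w ν, fderiv ℝ φ z ((0:ℝ), (1:ℝ))⟫ : ℝ) : ℂ) * u z ν
            + Complex.I * ((2 * Real.pi * ⟪w ν, φ z⟫ : ℝ) : ℂ)
              * fderiv ℝ u z ((0:ℝ), (1:ℝ)) ν))
        + Complex.I * (fderiv ℝ (fderiv ℝ u) z ((0:ℝ), (1:ℝ)) ((0:ℝ), (1:ℝ)) ν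
          - (Complex.I * ((2 * Real.pi * ⟪w ν, fderiv ℝ ψ z ((0:ℝ), (1:ℝ))⟫ : ℝ) : ℂ) * u z ν
            + Complex.I * ((2 * Real.pi * ⟪w ν, ψ z⟫ : ℝ) : ℂ)
              * fderiv ℝ u z ((0:ℝ), (1:ℝ)) ν)) = 0 := by
      push_cast at hC2 ⊢
      linear_combination hC2
    have hk := vortex_key (u z ν)
      (fderiv ℝ u z ((1:ℝ), (0:ℝ)) ν) (fderiv ℝ u z ((0:ℝ), (1:ℝ)) ν)
      (fderiv ℝ (fderiv ℝ u) z ((1:ℝ), (0:ℝ)) ((1:ℝ), (0:ℝ)) ν)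
      (fderiv ℝ (fderiv ℝ u) z ((1:ℝ), (0:ℝ)) ((0:ℝ), (1:ℝ)) ν)
      (fderiv ℝ (fderiv ℝ u) z ((0:ℝ), (1:ℝ)) ((0:ℝ), (1:ℝ)) ν)
      (2 * Real.pi * ⟪w ν, φ z⟫) (2 * Real.pi * ⟪w ν, ψ z⟫)
      (2 * Real.pi * ⟪w ν, fderiv ℝ φ z ((1:ℝ), (0:ℝ))⟫)
      (2 * Real.pi * ⟪w ν, fderiv ℝ φ z ((0:ℝ), (1:ℝ))⟫)
      (2 * Real.pi * ⟪w ν, fderiv ℝ ψ z ((1:ℝ), (0:ℝ))⟫)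
      (2 * Real.pi * ⟪w ν, fderiv ℝ ψ z ((0:ℝ), (1:ℝ))⟫)
      H0 H1 H2
    rw [mul_add, Complex.add_re] at hk
    rw [hpt, inner_sub_right, hconj, hconj]
    nlinarith [hk, Complex.normSq_nonneg (fderiv ℝ u z ((1:ℝ), (0:ℝ)) ν
        - Complex.I * ((2 * Real.pi * ⟪w ν, φ z⟫ : ℝ) : ℂ) * u z ν),
      Complex.normSq_nonneg (fderiv ℝ u z ((0:ℝ), (1:ℝ)) ν
        - Complex.I * ((2 * Real.pi * ⟪w ν, ψ z⟫ : ℝ) : ℂ) * u z ν)]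
  constructor
  · -- the inequality
    rw [hL1, hL2]
    calc (1/2 : ℝ) * (2 * ((⟪fderiv ℝ u z ((1:ℝ), (0:ℝ)), fderiv ℝ u z ((1:ℝ), (0:ℝ))⟫ : ℝ)
            + (⟪u z, fderiv ℝ (fderiv ℝ u) z ((1:ℝ), (0:ℝ)) ((1:ℝ), (0:ℝ))⟫ : ℝ))
          + 2 * ((⟪fderiv ℝ u z ((0:ℝ), (1:ℝ)), fderiv ℝ u z ((0:ℝ), (1:ℝ))⟫ : ℝ)
            + (⟪u z, fderiv ℝ (fderiv ℝ u) z ((0:ℝ), (1:ℝ)) ((0:ℝ), (1:ℝ))⟫ : ℝ)))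
        = ∑ ν, (((starRingEnd ℂ) (fderiv ℝ u z ((1:ℝ), (0:ℝ)) ν)
              * fderiv ℝ u z ((1:ℝ), (0:ℝ)) ν).re
            + ((starRingEnd ℂ) (u z ν)
              * fderiv ℝ (fderiv ℝ u) z ((1:ℝ), (0:ℝ)) ((1:ℝ), (0:ℝ)) ν).re
            + (((starRingEnd ℂ) (fderiv ℝ u z ((0:ℝ), (1:ℝ)) ν)
              * fderiv ℝ u z ((0:ℝ), (1:ℝ)) ν).re
              + ((starRingEnd ℂ) (u z ν)
              * fderiv ℝ (fderiv ℝ u) z ((0:ℝ), (1:ℝ)) ((0:ℝ), (1:ℝ)) ν).re)) := by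
          rw [hinner, hinner, hinner, hinner, Finset.sum_add_distrib,
            Finset.sum_add_distrib, Finset.sum_add_distrib]
          ring
      _ ≥ _ := by
          rw [Complex.re_sum]
          exact Finset.sum_le_sum fun ν _ => hkey ν
  · -- the equality
    rw [Complex.re_sum, real_inner_smul_left, sum_inner]
    calc ∑ ν, ((starRingEnd ℂ) (u z ν) * (Complex.I * ((2 * Real.pi * Complex.I *
            (((⟪w ν, fderiv ℝ ψ z ((1:ℝ), (0:ℝ)) - fderiv ℝ φ z ((0:ℝ), (1:ℝ))⟫ : ℝ)) : ℂ))
              * u z ν))).re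
        = ∑ ν, (-2) * (Real.pi * ((⟪(‖u z ν‖^2 : ℝ) • w ν,
            fderiv ℝ ψ z ((1:ℝ), (0:ℝ)) - fderiv ℝ φ z ((0:ℝ), (1:ℝ))⟫ : ℝ))) := by
          refine Finset.sum_congr rfl fun ν _ => ?_
          rw [hpt, real_inner_smul_left, hns]
          ring
      _ = -2 * (Real.pi * ∑ ν, ((⟪(‖u z ν‖^2 : ℝ) • w ν,
            fderiv ℝ ψ z ((1:ℝ), (0:ℝ)) - fderiv ℝ φ z ((0:ℝ), (1:ℝ))⟫ : ℝ))) := by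
          simp only [Finset.mul_sum]
end
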